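/- arXiv:1610.02770 — 3 statements merged into one kernel-verified Lean document; each statement's English description precedes it below -/
import Mathlib

section
/- Fix δ, γ, κ ∈ (0,1), β ∈ ℝ and M > 2/δ. For each integer k ≥ 2 set D := log k + log log k + β, assume D − 1 − γ > 0, and let a_k > M be the number with ν_r([M, a_k]) = (D−1−γ)/(1+γ). Let S₀ := Pois(D−1−γ) ⊗ ((1+γ)/(D−1−γ)) ν_r 1_{[M,a_k]}. Then there exists a constant C_M > 0 depending only on M such that, for all k with k log k · e^{−(γ+1−β)} > 1, the law of S₀ stochastically dominates the probability measure (e^{γ+1−β}/(k log k)) (δ₀ + (1 + C_M γ) ν_r 1_{[M, a_k¹]}), where a_k¹ > M is determined by 1 + (1 + C_M γ) ν_r([M, a_k¹]) = k log k · e^{−(γ+1−β)}. -/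
open MeasureTheory Set Real
open scoped ENNReal

/-- The measure `ν_r(dy) = (γ/y²) e^{δy} 1{y > M} dy`. -/
noncomputable def nuR (δ γ M : ℝ) : Measure ℝ :=
  volume.withDensity fun y =>
    ENNReal.ofReal (if M < y then γ / y ^ 2 * Real.exp (δ * y) else 0)

/-- The convolution of two measures on `ℝ` (law of the sum of independent samples). -/
noncomputable def mconv (μ ν : Measure ℝ) : Measure ℝ :=
  μ.bind fun x => ν.map (x + ·)

/-- The `n`-fold convolution of a measure on `ℝ`. -/
noncomputable def nconv (μ : Measure ℝ) : ℕ → Measure ℝ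
  | 0 => Measure.dirac 0
  | n + 1 => mconv μ (nconv μ n)

/-- `Pois(λ) ⊗ μ`: the law of `Σ_{i=1}^N Y_i` where `N ∼ Poisson(λ)` and the `Y_i`
are i.i.d. with (probability) law `μ`, independent of `N`. -/
noncomputable def compoundPoisson (lam : ℝ) (μ : Measure ℝ) : Measure ℝ :=
  Measure.sum fun n : ℕ =>
    ENNReal.ofReal (Real.exp (-lam) * lam ^ n / n.factorial) • nconv μ n

section helpers

variable {μ ν : Measure ℝ}

lemma measurable_map_addLeft (ν : Measure ℝ) [SFinite ν] :
    Measurable fun x : ℝ => ν.map (x + ·) := by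
  apply Measure.measurable_of_measurable_coe
  intro s hs
  have : (fun x : ℝ => ν.map (x + ·) s)
      = fun x : ℝ => ν (Prod.mk x ⁻¹' ((fun p : ℝ × ℝ => p.1 + p.2) ⁻¹' s)) := by
    funext x
    rw [Measure.map_apply (measurable_const_add x) hs]
    rfl
  rw [this]
  exact measurable_measure_prodMk_left (measurable_add hs)

lemma measurable_mconv_integrand (ν : Measure ℝ) [SFinite ν] {s : Set ℝ} (hs : MeasurableSet s) :
    Measurable fun x : ℝ => ν ((x + ·) ⁻¹' s) := by
  have : (fun x : ℝ => ν ((x + ·) ⁻¹' s))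
      = fun x : ℝ => ν (Prod.mk x ⁻¹' ((fun p : ℝ × ℝ => p.1 + p.2) ⁻¹' s)) := rfl
  rw [this]
  exact measurable_measure_prodMk_left (measurable_add hs)

lemma mconv_apply (μ ν : Measure ℝ) [SFinite ν] {s : Set ℝ} (hs : MeasurableSet s) :
    mconv μ ν s = ∫⁻ x, ν ((x + ·) ⁻¹' s) ∂μ := by
  rw [mconv, Measure.bind_apply hs (measurable_map_addLeft ν).aemeasurable]
  refine lintegral_congr fun x => ?_
  rw [Measure.map_apply (measurable_const_add x) hs]

lemma mconv_eq_map (μ ν : Measure ℝ) [SFinite ν] :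
    mconv μ ν = (μ.prod ν).map (fun p : ℝ × ℝ => p.1 + p.2) := by
  ext s hs
  rw [mconv_apply μ ν hs, Measure.map_apply measurable_add hs,
    Measure.prod_apply (measurable_add hs)]
  rfl

instance sfinite_mconv (μ ν : Measure ℝ) [SFinite μ] [SFinite ν] : SFinite (mconv μ ν) := by
  rw [mconv_eq_map]; infer_instance

instance sfinite_nconv (μ : Measure ℝ) [SFinite μ] (n : ℕ) : SFinite (nconv μ n) := by
  induction n with
  | zero => rw [nconv]; infer_instance
  | succ n ih => rw [nconv]; exact sfinite_mconv μ _

lemma mconv_mono {μ μ' ν ν' : Measure ℝ} [SFinite ν] [SFinite ν'] (hμ : μ ≤ μ') (hν : ν ≤ ν') :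
    mconv μ ν ≤ mconv μ' ν' := by
  refine Measure.le_iff.2 fun s hs => ?_
  rw [mconv_apply μ ν hs, mconv_apply μ' ν' hs]
  calc ∫⁻ x, ν ((x + ·) ⁻¹' s) ∂μ ≤ ∫⁻ x, ν' ((x + ·) ⁻¹' s) ∂μ :=
        lintegral_mono fun x => Measure.le_iff'.1 hν _
    _ ≤ _ := lintegral_mono' hμ le_rfl

lemma mconv_smul_right (μ ν : Measure ℝ) [SFinite ν] (c : ℝ≥0∞) :
    mconv μ (c • ν) = c • mconv μ ν := by
  ext s hs
  rw [Measure.smul_apply, smul_eq_mul, mconv_apply _ _ hs, mconv_apply _ _ hs,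
    ← lintegral_const_mul c (measurable_mconv_integrand ν hs)]
  simp [Measure.smul_apply]

lemma mconv_univ (μ ν : Measure ℝ) [SFinite ν] : mconv μ ν univ = μ univ * ν univ := by
  rw [mconv_apply _ _ MeasurableSet.univ]
  simp [lintegral_const, mul_comm]

lemma mconv_dirac_right (μ : Measure ℝ) : mconv μ (Measure.dirac 0) = μ := by
  ext s hs
  rw [mconv_apply _ _ hs]
  have : (fun x : ℝ => Measure.dirac (0:ℝ) ((x + ·) ⁻¹' s)) = s.indicator fun _ => (1:ℝ≥0∞) := by
    funext x
    rw [Measure.dirac_apply' _ (hs.preimage (measurable_const_add x))]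
    by_cases hx : x ∈ s
    · rw [Set.indicator_of_mem (by simpa using hx), Set.indicator_of_mem hx]; rfl
    · rw [Set.indicator_of_notMem (by simpa using hx), Set.indicator_of_notMem hx]
  rw [this]
  exact lintegral_indicator_one hs

lemma mconv_null {c d : ℝ} (hμ : μ (Iio c) = 0) (hν : ν (Iio d) = 0) [SFinite ν] :
    mconv μ ν (Iio (c + d)) = 0 := by
  rw [mconv_apply _ _ measurableSet_Iio]
  have h0 : ∀ᵐ x ∂μ, c ≤ x := by
    rw [ae_iff]
    convert hμ using 2
    ext x; simp [not_le]
  rw [lintegral_congr_ae (g := fun _ => 0)]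
  · simp
  · filter_upwards [h0] with x hx
    refine measure_mono_null (fun y hy => ?_) hν
    simp only [mem_preimage, mem_Iio] at hy ⊢
    linarith

lemma mconv_restrict_right (μ ν : Measure ℝ) [SFinite ν] {x : ℝ} (hμ : μ (Iio 0) = 0) :
    (mconv μ ν).restrict (Iic x) = (mconv μ (ν.restrict (Iic x))).restrict (Iic x) := by
  ext s hs
  rw [Measure.restrict_apply hs, Measure.restrict_apply hs,
    mconv_apply _ _ (hs.inter measurableSet_Iic), mconv_apply _ _ (hs.inter measurableSet_Iic)]
  have h0 : ∀ᵐ x' ∂μ, 0 ≤ x' := by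
    rw [ae_iff]
    convert hμ using 2
    ext y; simp [not_le]
  refine lintegral_congr_ae ?_
  filter_upwards [h0] with x' hx'
  rw [Measure.restrict_apply ((hs.inter measurableSet_Iic).preimage (measurable_const_add x'))]
  have hsub : (fun y => x' + y) ⁻¹' (s ∩ Iic x) ⊆ Iic x := by
    intro y hy
    simp only [mem_preimage, mem_inter_iff, mem_Iic] at hy ⊢
    linarith [hy.2]
  rw [inter_eq_self_of_subset_left hsub]

lemma mconv_restrict_left (μ ν : Measure ℝ) [SFinite ν] {x : ℝ} (hν : ν (Iio 0) = 0) :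
    (mconv μ ν).restrict (Iic x) = (mconv (μ.restrict (Iic x)) ν).restrict (Iic x) := by
  ext s hs
  rw [Measure.restrict_apply hs, Measure.restrict_apply hs,
    mconv_apply _ _ (hs.inter measurableSet_Iic), mconv_apply _ _ (hs.inter measurableSet_Iic)]
  rw [← lintegral_indicator measurableSet_Iic]
  refine lintegral_congr fun x' => ?_
  rw [Set.indicator_apply]
  by_cases hx' : x' ∈ Iic x
  · rw [if_pos hx']
  · rw [if_neg hx']
    refine measure_mono_null (fun y hy => ?_) hν
    simp only [mem_preimage, mem_inter_iff, mem_Iic, mem_Iio] at hy ⊢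
    simp only [mem_Iic, not_le] at hx'
    linarith [hy.2]

end helpers

section part2

lemma mconv_withDensity {f g : ℝ → ℝ≥0∞} (hf : Measurable f) (hg : Measurable g) {s : Set ℝ}
    (hs : MeasurableSet s) :
    mconv (volume.withDensity f) (volume.withDensity g) s
      = volume.withDensity (fun y => ∫⁻ u, f u * g (y - u)) s := by
  rw [mconv_apply _ _ hs,
    lintegral_withDensity_eq_lintegral_mul volume hf (measurable_mconv_integrand _ hs)]
  have step1 : ∀ u : ℝ, (volume.withDensity g) ((u + ·) ⁻¹' s)
      = ∫⁻ y, s.indicator (fun y => g (y - u)) y := by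
    intro u
    rw [withDensity_apply g (hs.preimage (measurable_const_add u)),
      ← lintegral_indicator (hs.preimage (measurable_const_add u))]
    calc ∫⁻ v, ((u + ·) ⁻¹' s).indicator g v
        = ∫⁻ v, s.indicator (fun y => g (y - u)) (u + v) := by
          refine lintegral_congr fun v => ?_
          by_cases hv : u + v ∈ s
          · rw [Set.indicator_of_mem (by simpa using hv), Set.indicator_of_mem hv]
            simp
          · rw [Set.indicator_of_notMem (by simpa using hv), Set.indicator_of_notMem hv]
      _ = ∫⁻ y, s.indicator (fun y => g (y - u)) y :=
          lintegral_add_left_eq_self (s.indicator fun y => g (y - u)) u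
  simp only [Pi.mul_apply]
  calc ∫⁻ u, f u * (volume.withDensity g) ((u + ·) ⁻¹' s)
      = ∫⁻ u, ∫⁻ y, f u * s.indicator (fun y => g (y - u)) y := by
        refine lintegral_congr fun u => ?_
        rw [step1 u]
        exact (lintegral_const_mul (f u)
          (Measurable.indicator (hg.comp (measurable_id.sub_const u)) hs)).symm
    _ = ∫⁻ y, ∫⁻ u, f u * s.indicator (fun y => g (y - u)) y := by
        refine lintegral_lintegral_swap ?_
        have : Function.uncurry (fun (u y : ℝ) => f u * s.indicator (fun y => g (y - u)) y)
            = fun p : ℝ × ℝ => f p.1 * (Prod.snd ⁻¹' s).indicator (fun q : ℝ × ℝ => g (q.2 - q.1)) p := by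
          funext p
          obtain ⟨u, y⟩ := p
          simp only [Function.uncurry]
          by_cases hp : y ∈ s
          · rw [Set.indicator_of_mem hp, Set.indicator_of_mem (by simpa using hp)]
          · rw [Set.indicator_of_notMem hp, Set.indicator_of_notMem (by simpa using hp)]
        rw [this]
        exact ((hf.comp measurable_fst).mul
          (((hg.comp (measurable_snd.sub measurable_fst))).indicator (measurable_snd hs))).aemeasurable
    _ = ∫⁻ y, s.indicator (fun y => ∫⁻ u, f u * g (y - u)) y := by
        refine lintegral_congr fun y => ?_
        by_cases hy : y ∈ s
        · rw [Set.indicator_of_mem hy]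
          refine lintegral_congr fun u => ?_
          rw [Set.indicator_of_mem hy]
        · rw [Set.indicator_of_notMem hy]
          calc ∫⁻ u, f u * Set.indicator s (fun y => g (y - u)) y
              = ∫⁻ _, 0 := lintegral_congr fun u => by
                rw [Set.indicator_of_notMem hy, mul_zero]
            _ = 0 := lintegral_zero
    _ = volume.withDensity (fun y => ∫⁻ u, f u * g (y - u)) s := by
        rw [withDensity_apply _ hs, ← lintegral_indicator hs]

lemma lintegral_reflect (h : ℝ → ℝ≥0∞) (hm : Measurable h) (c : ℝ) :
    ∫⁻ u, h (c - u) = ∫⁻ u, h u := by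
  have hmap : Measure.map (fun u : ℝ => c - u) volume = volume := by
    have : (fun u : ℝ => c - u) = (fun u : ℝ => c + u) ∘ (fun u : ℝ => -u) := by
      funext u; simp [sub_eq_add_neg]
    rw [this, ← Measure.map_map (measurable_const_add c) measurable_neg,
      Measure.map_neg_eq_self, map_add_left_eq_self]
  conv_rhs => rw [← hmap]
  rw [lintegral_map hm (show Measurable fun u : ℝ => c - u by fun_prop)]

lemma lintegral_Ioi_inv_sq {M : ℝ} (hM : 0 < M) :
    ∫⁻ u in Ioi M, ENNReal.ofReal (1 / u ^ 2) = ENNReal.ofReal (1 / M) := by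
  have h1 : ∫⁻ u in Ioi M, ENNReal.ofReal (1 / u ^ 2)
      = ∫⁻ u in Ioi M, ENNReal.ofReal (u ^ (-2 : ℝ)) := by
    refine setLIntegral_congr_fun measurableSet_Ioi (fun u hu => ?_)
    have hu0 : 0 < u := hM.trans hu
    congr 1
    have h2 : u ^ (-2:ℝ) = (u ^ (2:ℝ))⁻¹ := Real.rpow_neg hu0.le 2
    rw [h2, show (2:ℝ) = ((2:ℕ):ℝ) from by norm_num, Real.rpow_natCast, one_div]
  rw [h1, ← ofReal_integral_eq_lintegral_ofReal (integrableOn_Ioi_rpow_of_lt (by norm_num) hM)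
    (by filter_upwards [ae_restrict_mem measurableSet_Ioi] with u hu
        exact Real.rpow_nonneg (hM.trans hu).le _),
    integral_Ioi_rpow_of_lt (by norm_num) hM]
  norm_num
  rw [Real.rpow_neg_one]

end part2

section part3

variable {δ γ M : ℝ}

/-- density of nuR -/
noncomputable def nuD (δ γ M : ℝ) : ℝ → ℝ≥0∞ := fun y =>
  ENNReal.ofReal (if M < y then γ / y ^ 2 * Real.exp (δ * y) else 0)

lemma measurable_nuD : Measurable (nuD δ γ M) := by
  apply Measurable.ennreal_ofReal
  exact Measurable.ite (measurableSet_lt measurable_const measurable_id)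
    ((measurable_const.div (measurable_id.pow_const 2)).mul
      ((measurable_const.mul measurable_id).exp)) measurable_const

lemma nuR_eq : nuR δ γ M = volume.withDensity (nuD δ γ M) := rfl

lemma nuR_Iic_M : nuR δ γ M (Iic M) = 0 := by
  rw [nuR_eq, withDensity_apply _ measurableSet_Iic]
  have h0 : ∀ᵐ y ∂(volume.restrict (Iic M)), nuD δ γ M y = 0 := by
    filter_upwards [ae_restrict_mem measurableSet_Iic] with y hy
    have hy' : ¬ M < y := not_lt.2 (mem_Iic.1 hy)
    simp [nuD, hy']
  rw [lintegral_congr_ae h0, lintegral_zero]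

lemma nuR_null {t : Set ℝ} (ht : t ⊆ Iic M) : nuR δ γ M t = 0 :=
  measure_mono_null ht nuR_Iic_M

lemma nuR_restrict_Iic (x : ℝ) :
    (nuR δ γ M).restrict (Iic x) = (nuR δ γ M).restrict (Ioc M x) := by
  apply Measure.restrict_congr_set
  rw [ae_eq_set]
  constructor
  · exact nuR_null fun y hy => by
      simp only [mem_diff, mem_Iic, mem_Ioc, not_and] at hy ⊢
      by_contra h
      exact hy.2 (by linarith [not_le.1 h]) hy.1
  · have : Ioc M x \ Iic x = ∅ := by
      ext y; simp only [mem_diff, mem_Ioc, mem_Iic, mem_empty_iff_false, iff_false, not_and]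
      tauto
    rw [this]; exact measure_empty

lemma nuR_Icc_lt_top (hM : 0 < M) (hγ : 0 ≤ γ) (hδ : 0 ≤ δ) {b : ℝ} :
    nuR δ γ M (Icc M b) ≠ ⊤ := by
  rw [nuR_eq, withDensity_apply _ measurableSet_Icc]
  have hb : ∫⁻ y in Icc M b, nuD δ γ M y
      ≤ ∫⁻ _ in Icc M b, ENNReal.ofReal (γ / M ^ 2 * Real.exp (δ * b)) := by
    refine setLIntegral_mono measurable_const fun y hy => ?_
    simp only [nuD]
    split_ifs with h
    · refine ENNReal.ofReal_le_ofReal ?_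
      have hy1 : M ≤ y := hy.1
      have hy2 : y ≤ b := hy.2
      have hM2 : (0:ℝ) < M ^ 2 := by positivity
      refine mul_le_mul ?_ ?_ (Real.exp_pos _).le (by positivity)
      · exact div_le_div_of_nonneg_left hγ hM2 (by nlinarith)
      · exact Real.exp_le_exp.2 (mul_le_mul_of_nonneg_left hy2 hδ)
    · simp
  refine ne_of_lt (lt_of_le_of_lt hb ?_)
  rw [setLIntegral_const]
  exact ENNReal.mul_lt_top ENNReal.ofReal_lt_top (by simp [Real.volume_Icc])

lemma conv_est (hM : 0 < M) (hγ : 0 ≤ γ) (x : ℝ) :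
    mconv ((nuR δ γ M).restrict (Ioc M x)) ((nuR δ γ M).restrict (Ioc M x))
      ≤ ENNReal.ofReal (4 * γ / M) • nuR δ γ M := by
  set G : ℝ → ℝ≥0∞ := (Ioi M).indicator (fun t => ENNReal.ofReal (1 / t ^ 2)) with hG
  have hGm : Measurable G :=
    (Measurable.ennreal_ofReal (measurable_const.div (measurable_id.pow_const 2))).indicator
      measurableSet_Ioi
  set F : ℝ → ℝ≥0∞ := (Ioc M x).indicator (nuD δ γ M) with hFdef
  have hFm : Measurable F := measurable_nuD.indicator measurableSet_Ioc
  have hres : (nuR δ γ M).restrict (Ioc M x) = volume.withDensity F := by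
    rw [nuR_eq, restrict_withDensity measurableSet_Ioc, ← withDensity_indicator measurableSet_Ioc]
  have key : ∀ y : ℝ, (∫⁻ u, F u * F (y - u)) ≤ ENNReal.ofReal (4 * γ / M) * nuD δ γ M y := by
    intro y
    by_cases hy : 2 * M < y
    · have hy0 : 0 < y := by linarith
      have hyM : M < y := by linarith
      have ptw : ∀ u : ℝ, F u * F (y - u)
          ≤ ENNReal.ofReal (2 * γ ^ 2 * Real.exp (δ * y) / y ^ 2) * (G u + G (y - u)) := by
        intro u
        by_cases hu1 : u ∈ Ioc M x
        · by_cases hu2 : y - u ∈ Ioc M x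
          · have hu0 : 0 < u := hM.trans hu1.1
            have hv0 : 0 < y - u := hM.trans hu2.1
            rw [hFdef, hG]
            rw [Set.indicator_of_mem hu1, Set.indicator_of_mem hu2,
              Set.indicator_of_mem (show u ∈ Ioi M from hu1.1),
              Set.indicator_of_mem (show y - u ∈ Ioi M from hu2.1)]
            simp only [nuD, if_pos hu1.1, if_pos hu2.1]
            rw [← ENNReal.ofReal_mul (by positivity), ← ENNReal.ofReal_add (by positivity)
              (by positivity), ← ENNReal.ofReal_mul (by positivity)]
            refine ENNReal.ofReal_le_ofReal ?_
            have hexp : Real.exp (δ * u) * Real.exp (δ * (y - u)) = Real.exp (δ * y) := by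
              rw [← Real.exp_add]; ring_nf
            have core : 1 / (u ^ 2 * (y - u) ^ 2) ≤ 2 / y ^ 2 * (1 / u ^ 2 + 1 / (y - u) ^ 2) := by
              rw [div_add_div _ _ (by positivity) (by positivity), div_mul_div_comm,
                div_le_div_iff₀ (by positivity) (by positivity)]
              have h1 : (0:ℝ) < u ^ 2 * (y - u) ^ 2 := by positivity
              nlinarith [sq_nonneg (y - 2 * u), h1]
            calc γ / u ^ 2 * Real.exp (δ * u) * (γ / (y - u) ^ 2 * Real.exp (δ * (y - u)))
                = γ ^ 2 * Real.exp (δ * y) * (1 / (u ^ 2 * (y - u) ^ 2)) := by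
                  rw [← hexp]; field_simp
              _ ≤ γ ^ 2 * Real.exp (δ * y) * (2 / y ^ 2 * (1 / u ^ 2 + 1 / (y - u) ^ 2)) :=
                  mul_le_mul_of_nonneg_left core (by positivity)
              _ = 2 * γ ^ 2 * Real.exp (δ * y) / y ^ 2 * (1 / u ^ 2 + 1 / (y - u) ^ 2) := by
                  ring
          · rw [hFdef, Set.indicator_of_notMem hu2, mul_zero]; exact zero_le
        · rw [hFdef, Set.indicator_of_notMem hu1, zero_mul]; exact zero_le
      have hGy : ∫⁻ u, G (y - u) = ∫⁻ u, G u := lintegral_reflect G hGm y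
      have hGval : ∫⁻ u, G u = ENNReal.ofReal (1 / M) := by
        rw [hG, lintegral_indicator measurableSet_Ioi]
        exact lintegral_Ioi_inv_sq hM
      calc ∫⁻ u, F u * F (y - u)
          ≤ ∫⁻ u, ENNReal.ofReal (2 * γ ^ 2 * Real.exp (δ * y) / y ^ 2) * (G u + G (y - u)) :=
            lintegral_mono ptw
        _ = ENNReal.ofReal (2 * γ ^ 2 * Real.exp (δ * y) / y ^ 2)
            * ((∫⁻ u, G u) + ∫⁻ u, G (y - u)) := by
            have hcomp : Measurable fun u : ℝ => G (y - u) := hGm.comp (by fun_prop)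
            rw [lintegral_const_mul _ (show Measurable fun u => G u + G (y - u) from hGm.add hcomp), lintegral_add_left hGm]
        _ = ENNReal.ofReal (2 * γ ^ 2 * Real.exp (δ * y) / y ^ 2)
            * ENNReal.ofReal (2 * (1 / M)) := by
            rw [hGy, hGval, ← ENNReal.ofReal_add (by positivity) (by positivity)]
            congr 2
            ring
        _ ≤ ENNReal.ofReal (4 * γ / M) * nuD δ γ M y := by
            rw [← ENNReal.ofReal_mul (by positivity)]
            simp only [nuD, if_pos hyM]
            rw [← ENNReal.ofReal_mul (by positivity)]
            refine ENNReal.ofReal_le_ofReal (le_of_eq ?_)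
            field_simp
            ring
    · have hz : ∀ u : ℝ, F u * F (y - u) = 0 := by
        intro u
        by_cases hu1 : u ∈ Ioc M x
        · have hu2 : y - u ∉ Ioc M x := fun hu2 => hy (by linarith [hu1.1, hu2.1])
          rw [hFdef, Set.indicator_of_notMem hu2, mul_zero]
        · rw [hFdef, Set.indicator_of_notMem hu1, zero_mul]
      rw [lintegral_congr hz, lintegral_zero]
      exact zero_le
  refine Measure.le_iff.2 fun s hs => ?_
  rw [hres, mconv_withDensity hFm hFm hs, Measure.smul_apply, smul_eq_mul]
  rw [withDensity_apply _ hs, nuR_eq, withDensity_apply _ hs]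
  calc ∫⁻ y in s, ∫⁻ u, F u * F (y - u)
      ≤ ∫⁻ y in s, ENNReal.ofReal (4 * γ / M) * nuD δ γ M y :=
        setLIntegral_mono (measurable_const.mul measurable_nuD) fun y _ => key y
    _ = ENNReal.ofReal (4 * γ / M) * ∫⁻ y in s, nuD δ γ M y :=
        lintegral_const_mul _ measurable_nuD

end part3

section part4

variable {δ γ M : ℝ}

instance sfinite_nuR : SFinite (nuR δ γ M) :=
  inferInstanceAs (SFinite (volume.withDensity _))

lemma smul_mono_meas {c : ℝ≥0∞} {μ ν : Measure ℝ} (h : μ ≤ ν) : c • μ ≤ c • ν := by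
  refine Measure.le_iff'.2 fun s => ?_
  simp only [Measure.smul_apply, smul_eq_mul]
  exact mul_le_mul_right (Measure.le_iff'.1 h s) c

lemma base_bound (c : ℝ≥0∞) (x a : ℝ) :
    ((c • (nuR δ γ M).restrict (Icc M a)).restrict (Iic x))
      ≤ c • (nuR δ γ M).restrict (Ioc M x) := by
  rw [Measure.restrict_smul]
  refine smul_mono_meas ?_
  rw [Measure.restrict_restrict measurableSet_Iic]
  calc (nuR δ γ M).restrict (Iic x ∩ Icc M a)
      ≤ (nuR δ γ M).restrict (Iic x) := Measure.restrict_mono inter_subset_left le_rfl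
    _ = (nuR δ γ M).restrict (Ioc M x) := nuR_restrict_Iic x

lemma nuR_restrict_Iio0 (hM : 0 ≤ M) (t : Set ℝ) : (nuR δ γ M).restrict t (Iio 0) = 0 := by
  rw [Measure.restrict_apply measurableSet_Iio]
  exact nuR_null fun y hy => le_trans hy.1.le hM

lemma mconv_smul_left (μ ν : Measure ℝ) [SFinite ν] (c : ℝ≥0∞) :
    mconv (c • μ) ν = c • mconv μ ν := by
  ext s hs
  rw [Measure.smul_apply, smul_eq_mul, mconv_apply _ _ hs, mconv_apply _ _ hs,
    lintegral_smul_measure, smul_eq_mul]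

lemma nconv_bound (hM : 0 < M) (c : ℝ≥0∞) (hγ : 0 ≤ γ) (a x : ℝ) :
    ∀ n : ℕ, (nconv (c • (nuR δ γ M).restrict (Icc M a)) (n + 1)).restrict (Iic x)
      ≤ (c ^ (n + 1) * (ENNReal.ofReal (4 * γ / M)) ^ n) •
          (nuR δ γ M).restrict (Ioc M x) := by
  set ν := nuR δ γ M with hν
  set μ₀ := c • ν.restrict (Icc M a) with hμ₀
  set K : ℝ≥0∞ := ENNReal.ofReal (4 * γ / M) with hK
  have hμ₀0 : μ₀ (Iio 0) = 0 := by
    rw [hμ₀, Measure.smul_apply, nuR_restrict_Iio0 hM.le, smul_eq_mul, mul_zero]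
  have hw0 : (ν.restrict (Ioc M x)) (Iio 0) = 0 := nuR_restrict_Iio0 hM.le _
  have hstep : ∀ (T : Measure ℝ), SFinite T →
      (mconv μ₀ T).restrict (Iic x) ≤ ((mconv μ₀ (T.restrict (Iic x))).restrict (Iic x)) := by
    intro T hT
    rw [← mconv_restrict_right μ₀ T hμ₀0]
  have hcore : (mconv μ₀ (ν.restrict (Ioc M x))).restrict (Iic x)
      ≤ (c * K) • ν.restrict (Ioc M x) := by
    rw [mconv_restrict_left _ _ hw0]
    calc (mconv (μ₀.restrict (Iic x)) (ν.restrict (Ioc M x))).restrict (Iic x)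
        ≤ (mconv (c • ν.restrict (Ioc M x)) (ν.restrict (Ioc M x))).restrict (Iic x) :=
          Measure.restrict_mono (subset_refl _) (mconv_mono (base_bound c x a) le_rfl)
      _ = c • ((mconv (ν.restrict (Ioc M x)) (ν.restrict (Ioc M x))).restrict (Iic x)) := by
          rw [mconv_smul_left, Measure.restrict_smul]
      _ ≤ c • ((K • ν).restrict (Iic x)) :=
          smul_mono_meas (Measure.restrict_mono (subset_refl _) (conv_est hM hγ x))
      _ = (c * K) • ν.restrict (Iic x) := by rw [Measure.restrict_smul, smul_smul]
      _ = (c * K) • ν.restrict (Ioc M x) := by rw [nuR_restrict_Iic]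
  intro n
  induction n with
  | zero =>
    have h1 : nconv μ₀ 1 = μ₀ := by
      show mconv μ₀ (nconv μ₀ 0) = μ₀
      show mconv μ₀ (Measure.dirac 0) = μ₀
      exact mconv_dirac_right μ₀
    rw [h1, pow_one, pow_zero, mul_one]
    exact base_bound c x a
  | succ n ih =>
    have h1 : nconv μ₀ (n + 2) = mconv μ₀ (nconv μ₀ (n + 1)) := rfl
    rw [h1]
    calc (mconv μ₀ (nconv μ₀ (n + 1))).restrict (Iic x)
        = (mconv μ₀ ((nconv μ₀ (n + 1)).restrict (Iic x))).restrict (Iic x) :=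
          mconv_restrict_right μ₀ _ hμ₀0
      _ ≤ (mconv μ₀ ((c ^ (n + 1) * K ^ n) • ν.restrict (Ioc M x))).restrict (Iic x) :=
          Measure.restrict_mono (subset_refl _) (mconv_mono le_rfl ih)
      _ = (c ^ (n + 1) * K ^ n) • ((mconv μ₀ (ν.restrict (Ioc M x))).restrict (Iic x)) := by
          rw [mconv_smul_right, Measure.restrict_smul]
      _ ≤ (c ^ (n + 1) * K ^ n) • ((c * K) • ν.restrict (Ioc M x)) := smul_mono_meas hcore
      _ = (c ^ (n + 2) * K ^ (n + 1)) • ν.restrict (Ioc M x) := by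
          rw [smul_smul]
          congr 1
          ring

lemma nconv_univ_one {μ : Measure ℝ} [SFinite μ] (h : μ univ = 1) :
    ∀ n, nconv μ n univ = 1 := by
  intro n
  induction n with
  | zero => simp [nconv]
  | succ n ih =>
    rw [show nconv μ (n + 1) = mconv μ (nconv μ n) from rfl, mconv_univ, h, ih, mul_one]

lemma real_exp_eq_tsum (z : ℝ) : Real.exp z = ∑' n : ℕ, z ^ n / n.factorial := by
  rw [Real.exp_eq_exp_ℝ, NormedSpace.exp_eq_tsum_div]

lemma series_est {γ K : ℝ} (hγ0 : 0 ≤ γ) (hγ1 : γ ≤ 1) (hK : 0 ≤ K) :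
    Summable (fun n : ℕ => (1 + γ) ^ (n + 1) * (K * γ) ^ n / (n + 1).factorial)
    ∧ (∑' n : ℕ, (1 + γ) ^ (n + 1) * (K * γ) ^ n / (n + 1).factorial)
        ≤ 1 + γ * (1 + 4 * K * Real.exp (2 * K)) := by
  set t : ℕ → ℝ := fun n => (1 + γ) ^ (n + 1) * (K * γ) ^ n / (n + 1).factorial with ht
  have ht_nonneg : ∀ n, 0 ≤ t n := fun n => by positivity
  have hKγ : K * γ ≤ K := mul_le_of_le_one_right hK hγ1
  have hmaj : ∀ n, t n ≤ 2 * ((2 * K) ^ n / n.factorial) := by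
    intro n
    have h1 : (1 + γ) ^ (n + 1) ≤ 2 ^ (n + 1) := pow_le_pow_left₀ (by linarith) (by linarith) _
    have h2 : (K * γ) ^ n ≤ K ^ n := pow_le_pow_left₀ (by positivity) hKγ _
    have h3 : ((n.factorial : ℕ) : ℝ) ≤ (((n + 1).factorial : ℕ) : ℝ) := by
      exact_mod_cast Nat.factorial_le (Nat.le_succ n)
    calc t n ≤ 2 ^ (n + 1) * K ^ n / n.factorial :=
          div_le_div₀ (by positivity)
            (mul_le_mul h1 h2 (by positivity) (by positivity)) (by positivity) h3
      _ = 2 * ((2 * K) ^ n / n.factorial) := by rw [mul_pow]; ring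
  have hs : Summable t :=
    Summable.of_nonneg_of_le ht_nonneg hmaj ((Real.summable_pow_div_factorial (2 * K)).mul_left 2)
  refine ⟨hs, ?_⟩
  rw [hs.tsum_eq_zero_add]
  have ht0 : t 0 = 1 + γ := by simp [ht]
  have hshift : ∀ n : ℕ, t (n + 1) ≤ (4 * K * γ) * ((2 * K) ^ n / n.factorial) := by
    intro n
    have h1 : (1 + γ) ^ (n + 2) ≤ 2 ^ (n + 2) := pow_le_pow_left₀ (by linarith) (by linarith) _
    have h2 : (K * γ) ^ (n + 1) ≤ K ^ (n + 1) * γ := by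
      rw [mul_pow]
      exact mul_le_mul_of_nonneg_left (pow_le_of_le_one hγ0 hγ1 (Nat.succ_ne_zero n))
        (by positivity)
    have h3 : ((n.factorial : ℕ) : ℝ) ≤ (((n + 2).factorial : ℕ) : ℝ) := by
      exact_mod_cast Nat.factorial_le (by omega)
    calc t (n + 1) = (1 + γ) ^ (n + 2) * (K * γ) ^ (n + 1) / (n + 2).factorial := rfl
      _ ≤ 2 ^ (n + 2) * (K ^ (n + 1) * γ) / n.factorial :=
          div_le_div₀ (by positivity)
            (mul_le_mul h1 h2 (by positivity) (by positivity)) (by positivity) h3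
      _ = (4 * K * γ) * ((2 * K) ^ n / n.factorial) := by
          rw [mul_pow]; ring
  have hsum_shift : Summable fun n => t (n + 1) := (summable_nat_add_iff 1).2 hs
  have hmajsum : Summable fun n : ℕ => (4 * K * γ) * ((2 * K) ^ n / n.factorial) :=
    (Real.summable_pow_div_factorial (2 * K)).mul_left _
  calc t 0 + ∑' n, t (n + 1)
      ≤ (1 + γ) + ∑' n : ℕ, (4 * K * γ) * ((2 * K) ^ n / n.factorial) := by
        rw [ht0]
        exact add_le_add le_rfl (Summable.tsum_le_tsum hshift hsum_shift hmajsum)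
    _ = (1 + γ) + (4 * K * γ) * Real.exp (2 * K) := by
        rw [tsum_mul_left, ← real_exp_eq_tsum]
    _ = 1 + γ * (1 + 4 * K * Real.exp (2 * K)) := by ring

lemma ennreal_tsum_exp {z : ℝ} (hz : 0 ≤ z) :
    ∑' n : ℕ, ENNReal.ofReal (z ^ n / n.factorial) = ENNReal.ofReal (Real.exp z) := by
  rw [real_exp_eq_tsum, ENNReal.ofReal_tsum_of_nonneg (fun n => by positivity)
    (Real.summable_pow_div_factorial z)]

end part4


set_option maxHeartbeats 2000000 in
/-- With `D := log k + log log k + β` and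
`S₀ := Pois(D−1−γ) ⊗ ((1+γ)/(D−1−γ)) ν_r 1_{[M,a_k]}` (where `ν_r([M,a_k]) = (D−1−γ)/(1+γ)`),
there is a constant `C_M > 0`, depending only on `M`, such that whenever
`k log k e^{−(γ+1−β)} > 1`, the law of `S₀` stochastically dominates
`(e^{γ+1−β}/(k log k)) (δ₀ + (1+C_M γ) ν_r 1_{[M,a_k¹]})`, where `a_k¹` is determined by
`1 + (1+C_M γ) ν_r([M,a_k¹]) = k log k e^{−(γ+1−β)}`. -/
theorem stmt5 :
    ∀ M : ℝ, 0 < M → ∃ C : ℝ, 0 < C ∧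
      ∀ (δ γ κ β : ℝ) (k : ℕ) (a a1 : ℝ),
        δ ∈ Ioo (0 : ℝ) 1 → γ ∈ Ioo (0 : ℝ) 1 → κ ∈ Ioo (0 : ℝ) 1 →
        2 ≤ k → 2 / δ < M →
        0 < (Real.log k + Real.log (Real.log k) + β) - 1 - γ →
        M < a →
        nuR δ γ M (Icc M a)
          = ENNReal.ofReal
              (((Real.log k + Real.log (Real.log k) + β) - 1 - γ) / (1 + γ)) →
        1 < (k : ℝ) * Real.log k * Real.exp (-(γ + 1 - β)) →
        M < a1 →
        1 + (1 + C * γ) * (nuR δ γ M (Icc M a1)).toReal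
          = (k : ℝ) * Real.log k * Real.exp (-(γ + 1 - β)) →
        ∀ x : ℝ,
          compoundPoisson ((Real.log k + Real.log (Real.log k) + β) - 1 - γ)
              (ENNReal.ofReal
                  ((1 + γ) / ((Real.log k + Real.log (Real.log k) + β) - 1 - γ)) •
                ((nuR δ γ M).restrict (Icc M a))) (Iic x)
            ≤ (ENNReal.ofReal (Real.exp (γ + 1 - β) / ((k : ℝ) * Real.log k)) •
                (Measure.dirac (0 : ℝ) +
                  ENNReal.ofReal (1 + C * γ) • ((nuR δ γ M).restrict (Icc M a1))))
                (Iic x) := by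
  intro M hM
  refine ⟨1 + 16 / M * Real.exp (8 / M), by positivity, ?_⟩
  intro δ γ κ β k a a1 hδ hγ hκ hk hMδ hL ha hνa hklog ha1 hνa1 x
  set C : ℝ := 1 + 16 / M * Real.exp (8 / M) with hC
  set L : ℝ := Real.log k + Real.log (Real.log k) + β - 1 - γ with hLdef
  have hγ0 : 0 < γ := hγ.1
  have hγ1 : γ < 1 := hγ.2
  have hδ0 : 0 < δ := hδ.1
  have hk2 : (2:ℝ) ≤ (k:ℝ) := by exact_mod_cast hk
  have hk0 : (0:ℝ) < k := by linarith
  have hlogk : 0 < Real.log k := Real.log_pos (by linarith)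
  have hexpL : Real.exp (γ + 1 - β) / ((k:ℝ) * Real.log k) = Real.exp (-L) := by
    have h1 : -L = γ + 1 - β - Real.log k - Real.log (Real.log k) := by rw [hLdef]; ring
    conv_rhs => rw [h1, Real.exp_sub, Real.exp_sub, Real.exp_log hk0, Real.exp_log hlogk]
    rw [div_div]
  have heL : (k:ℝ) * Real.log k * Real.exp (-(γ + 1 - β)) = Real.exp L := by
    have h1 : L = Real.log k + Real.log (Real.log k) + -(γ + 1 - β) := by rw [hLdef]; ring
    rw [h1, Real.exp_add, Real.exp_add, Real.exp_log hk0, Real.exp_log hlogk]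
  set ν : Measure ℝ := nuR δ γ M with hνdef
  set c₀ : ℝ≥0∞ := ENNReal.ofReal ((1 + γ) / L) with hc₀
  set μ₀ : Measure ℝ := c₀ • ν.restrict (Icc M a) with hμ₀
  have hCpos : 0 < C := by rw [hC]; positivity
  clear_value ν c₀ μ₀ C L
  haveI : SFinite ν := by rw [hνdef]; infer_instance
  haveI : SFinite μ₀ := by rw [hμ₀]; infer_instance
  have hRHS : (ENNReal.ofReal (Real.exp (γ + 1 - β) / ((k : ℝ) * Real.log k)) •
        (Measure.dirac (0:ℝ) + ENNReal.ofReal (1 + C * γ) • (ν.restrict (Icc M a1)))) (Iic x)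
      = ENNReal.ofReal (Real.exp (-L)) *
          (Measure.dirac (0:ℝ) (Iic x) + ENNReal.ofReal (1 + C * γ) * ν (Iic x ∩ Icc M a1)) := by
    rw [hexpL]
    simp [Measure.smul_apply, Measure.add_apply, Measure.restrict_apply measurableSet_Iic,
      smul_eq_mul, mul_add]
  rw [hRHS]
  have hbound : ∀ n : ℕ, nconv μ₀ (n + 1) (Iic x)
      ≤ c₀ ^ (n + 1) * (ENNReal.ofReal (4 * γ / M)) ^ n * ν (Ioc M x) := by
    intro n
    have h := Measure.le_iff'.1 (nconv_bound (δ := δ) hM c₀ hγ0.le a x n) (Iic x)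
    rw [← hνdef, ← hμ₀, Measure.restrict_apply measurableSet_Iic, inter_self,
      Measure.smul_apply, smul_eq_mul, Measure.restrict_apply measurableSet_Iic,
      inter_eq_self_of_subset_right Ioc_subset_Iic_self] at h
    exact h
  rcases lt_or_ge x 0 with hx0 | hx0
  · have hLHS0 : compoundPoisson L μ₀ (Iic x) = 0 := by
      rw [compoundPoisson, Measure.sum_apply _ measurableSet_Iic]
      refine ENNReal.tsum_eq_zero.2 fun n => ?_
      rw [Measure.smul_apply, smul_eq_mul]
      cases n with
      | zero =>
        have h0 : (nconv μ₀ 0) (Iic x) = 0 := by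
          show Measure.dirac (0:ℝ) (Iic x) = 0
          rw [Measure.dirac_apply' _ measurableSet_Iic,
            Set.indicator_of_notMem (by simpa using not_le.2 hx0)]
        rw [h0, mul_zero]
      | succ n =>
        have h := hbound n
        have hempty : Ioc M x = ∅ := Ioc_eq_empty (by intro hc; linarith)
        rw [hempty, measure_empty, mul_zero, nonpos_iff_eq_zero] at h
        rw [h, mul_zero]
    rw [hLHS0]; exact zero_le
  rcases le_or_gt a1 x with hxa1 | hxa1
  · -- x ≥ a1 : RHS = 1 and LHS ≤ total mass ≤ 1
    have hμ₀univ : μ₀ univ = 1 := by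
      rw [hμ₀, Measure.smul_apply, Measure.restrict_apply_univ, hνa, hc₀, smul_eq_mul,
        ← ENNReal.ofReal_mul (by positivity),
        show (1 + γ) / L * (L / (1 + γ)) = 1 from by field_simp]
      exact ENNReal.ofReal_one
    have h1 : compoundPoisson L μ₀ univ = 1 := by
      rw [compoundPoisson, Measure.sum_apply _ MeasurableSet.univ]
      have hterm : ∀ n : ℕ,
          (ENNReal.ofReal (Real.exp (-L) * L ^ n / n.factorial) • nconv μ₀ n) univ
            = ENNReal.ofReal (Real.exp (-L)) * ENNReal.ofReal (L ^ n / n.factorial) := by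
        intro n
        rw [Measure.smul_apply, smul_eq_mul, nconv_univ_one hμ₀univ, mul_one,
          show Real.exp (-L) * L ^ n / n.factorial
            = Real.exp (-L) * (L ^ n / n.factorial) from by ring,
          ENNReal.ofReal_mul (Real.exp_nonneg _)]
      rw [tsum_congr hterm, ENNReal.tsum_mul_left, ennreal_tsum_exp hL.le,
        ← ENNReal.ofReal_mul (Real.exp_nonneg _), ← Real.exp_add, neg_add_cancel, Real.exp_zero,
        ENNReal.ofReal_one]
    have hRHS1 : ENNReal.ofReal (Real.exp (-L)) *
        (Measure.dirac (0:ℝ) (Iic x) + ENNReal.ofReal (1 + C * γ) * ν (Iic x ∩ Icc M a1))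
          = 1 := by
      have hinter : Iic x ∩ Icc M a1 = Icc M a1 :=
        inter_eq_self_of_subset_right (fun y hy => le_trans hy.2 hxa1)
      have hdirac : Measure.dirac (0:ℝ) (Iic x) = 1 :=
        Measure.dirac_apply_of_mem (mem_Iic.2 hx0)
      have hfin : ν (Icc M a1) ≠ ⊤ := by rw [hνdef]; exact nuR_Icc_lt_top hM hγ0.le hδ0.le
      have hval : (1 + C * γ) * (ν (Icc M a1)).toReal = Real.exp L - 1 := by
        rw [heL] at hνa1
        linarith [hνa1]
      rw [hinter, hdirac, ← ENNReal.ofReal_toReal hfin,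
        ← ENNReal.ofReal_mul (by nlinarith : (0:ℝ) ≤ 1 + C * γ),
        hval, show (1:ℝ≥0∞) = ENNReal.ofReal 1 from ENNReal.ofReal_one.symm,
        ← ENNReal.ofReal_add zero_le_one (sub_nonneg.2 (Real.one_le_exp hL.le)),
        show (1:ℝ) + (Real.exp L - 1) = Real.exp L from by ring,
        ← ENNReal.ofReal_mul (Real.exp_nonneg _), ← Real.exp_add, neg_add_cancel, Real.exp_zero,
        ENNReal.ofReal_one]
    rw [hRHS1]
    calc compoundPoisson L μ₀ (Iic x) ≤ compoundPoisson L μ₀ univ :=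
          measure_mono (subset_univ _)
      _ = 1 := h1
  · -- main case : 0 ≤ x < a1
    have hdirac : Measure.dirac (0:ℝ) (Iic x) = 1 :=
      Measure.dirac_apply_of_mem (mem_Iic.2 hx0)
    set s : ℕ → ℝ := fun n => (1 + γ) ^ (n + 1) * ((4 / M) * γ) ^ n / (n + 1).factorial with hs
    have hser := series_est hγ0.le hγ1.le (show (0:ℝ) ≤ 4 / M by positivity)
    have hterm : ∀ n : ℕ,
        ENNReal.ofReal (Real.exp (-L) * L ^ (n + 1) / (n + 1).factorial)
            * nconv μ₀ (n + 1) (Iic x)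
          ≤ ENNReal.ofReal (Real.exp (-L)) * ENNReal.ofReal (s n) * ν (Ioc M x) := by
      intro n
      refine le_trans (mul_le_mul_right (hbound n) _) (le_of_eq ?_)
      rw [← mul_assoc, ← mul_assoc]
      congr 1
      rw [hc₀, ← ENNReal.ofReal_pow (by positivity), ← ENNReal.ofReal_pow (by positivity),
        ← ENNReal.ofReal_mul (by positivity), ← ENNReal.ofReal_mul (by positivity),
        ← ENNReal.ofReal_mul (Real.exp_nonneg _)]
      congr 1
      rw [hs]
      have hLne : L ≠ 0 := hL.ne'
      field_simp
      rw [← mul_pow]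
      congr 1
      field_simp
    have hsplit : compoundPoisson L μ₀ (Iic x)
        = (ENNReal.ofReal (Real.exp (-L) * L ^ 0 / Nat.factorial 0) • nconv μ₀ 0) (Iic x)
          + ∑' n : ℕ, (ENNReal.ofReal (Real.exp (-L) * L ^ (n + 1) / (n + 1).factorial)
              • nconv μ₀ (n + 1)) (Iic x) := by
      rw [compoundPoisson, Measure.sum_apply _ measurableSet_Iic]
      exact tsum_eq_zero_add' ENNReal.summable
    rw [hsplit]
    have hzero : (ENNReal.ofReal (Real.exp (-L) * L ^ 0 / Nat.factorial 0) • nconv μ₀ 0) (Iic x)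
        = ENNReal.ofReal (Real.exp (-L)) := by
      rw [Measure.smul_apply, smul_eq_mul, show nconv μ₀ 0 = Measure.dirac 0 from rfl, hdirac,
        mul_one]
      norm_num
    calc (ENNReal.ofReal (Real.exp (-L) * L ^ 0 / Nat.factorial 0) • nconv μ₀ 0) (Iic x)
        + ∑' n : ℕ, (ENNReal.ofReal (Real.exp (-L) * L ^ (n + 1) / (n + 1).factorial)
            • nconv μ₀ (n + 1)) (Iic x)
        ≤ ENNReal.ofReal (Real.exp (-L))
          + ENNReal.ofReal (Real.exp (-L)) * ENNReal.ofReal (1 + C * γ) * ν (Ioc M x) := by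
          refine add_le_add (le_of_eq hzero) ?_
          calc ∑' n : ℕ, (ENNReal.ofReal (Real.exp (-L) * L ^ (n + 1) / (n + 1).factorial)
                  • nconv μ₀ (n + 1)) (Iic x)
              ≤ ∑' n : ℕ, ENNReal.ofReal (Real.exp (-L)) * ENNReal.ofReal (s n) * ν (Ioc M x) :=
                ENNReal.tsum_le_tsum fun n => by
                  rw [Measure.smul_apply, smul_eq_mul]; exact hterm n
            _ = ENNReal.ofReal (Real.exp (-L)) * (∑' n : ℕ, ENNReal.ofReal (s n)) * ν (Ioc M x) := by
                rw [ENNReal.tsum_mul_right, ENNReal.tsum_mul_left]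
            _ ≤ ENNReal.ofReal (Real.exp (-L)) * ENNReal.ofReal (1 + C * γ) * ν (Ioc M x) := by
                refine mul_le_mul_left (mul_le_mul_right ?_ _) _
                rw [← ENNReal.ofReal_tsum_of_nonneg (fun n => by positivity) hser.1]
                refine ENNReal.ofReal_le_ofReal ?_
                refine le_trans hser.2 (le_of_eq ?_)
                rw [hC]
                have e1 : 2 * (4 / M) = 8 / M := by ring
                rw [e1]
                ring
      _ = ENNReal.ofReal (Real.exp (-L))
          * (1 + ENNReal.ofReal (1 + C * γ) * ν (Ioc M x)) := by
          rw [mul_add, mul_one, mul_assoc]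
      _ ≤ ENNReal.ofReal (Real.exp (-L)) *
          (Measure.dirac (0:ℝ) (Iic x) + ENNReal.ofReal (1 + C * γ) * ν (Iic x ∩ Icc M a1)) := by
          refine mul_le_mul_right ?_ _
          rw [hdirac]
          refine add_le_add le_rfl (mul_le_mul_right (measure_mono fun y hy => ?_) _)
          exact ⟨hy.2, hy.1.le, le_trans hy.2 hxa1.le⟩
end

section
/- For every M > 0 there exists a constant C_M > 0 such that for every integer n ≥ 2 and every real z ≥ nM, the integral over the region { (y₁,…,y_{n−1}) : y_i ≥ M for all i, Σ_{i=1}^{n−1} y_i ≤ z − M } of the function 1 / ( y₁² y₂² ⋯ y_{n−1}² (z − Σ_{i=1}^{n−1} y_i)² ) with respect to dy₁ ⋯ dy_{n−1} is at most C_M^n / z². -/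
open MeasureTheory Set
open scoped ENNReal


noncomputable def gM (M : ℝ) : ℝ → ℝ≥0∞ :=
  (Ici M).indicator fun t => ENNReal.ofReal (1 / t ^ 2)

lemma gM_measurable (M : ℝ) : Measurable (gM M) :=
  (Measurable.ennreal_ofReal (by fun_prop)).indicator measurableSet_Ici

lemma lintegral_gM {M : ℝ} (hM : 0 < M) : ∫⁻ t, gM M t = ENNReal.ofReal M⁻¹ := by
  rw [gM, lintegral_indicator measurableSet_Ici, ← MeasureTheory.restrict_Ioi_eq_restrict_Ici]
  have hcong : ∀ t ∈ Ioi M, (1 : ℝ) / t ^ 2 = t ^ (-2 : ℝ) := by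
    intro t ht
    have ht0 : 0 < t := hM.trans ht
    rw [Real.rpow_neg ht0.le, one_div, show ((2:ℝ)) = ((2:ℕ):ℝ) by norm_num,
      Real.rpow_natCast]
  have hint : IntegrableOn (fun t : ℝ => 1 / t ^ 2) (Ioi M) := by
    refine (integrableOn_Ioi_rpow_of_lt (by norm_num : (-2:ℝ) < -1) hM).congr_fun
      (fun t ht => (hcong t ht).symm) measurableSet_Ioi
  rw [← MeasureTheory.ofReal_integral_eq_lintegral_ofReal hint]
  · rw [setIntegral_congr_fun measurableSet_Ioi hcong, integral_Ioi_rpow_of_lt (by norm_num) hM]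
    norm_num [Real.rpow_neg_one]
  · filter_upwards [] with t
    positivity

lemma lintegral_pi_prod (g : ℝ → ℝ≥0∞) (hg : Measurable g) :
    ∀ m : ℕ, ∫⁻ y : Fin m → ℝ, ∏ i, g (y i) = (∫⁻ t, g t) ^ m := by
  intro m
  induction m with
  | zero =>
      simp [MeasureTheory.volume_pi, Measure.pi_univ]
  | succ m ih =>
      have hmp := (volume_preserving_piFinSuccAbove (fun _ : Fin (m + 1) => ℝ) 0)
      have hFm : Measurable fun y : Fin (m + 1) → ℝ => ∏ i, g (y i) :=
        Finset.measurable_prod _ fun i _ => hg.comp (measurable_pi_apply i)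
      have key := (hmp.symm _).lintegral_comp (f := fun y : Fin (m + 1) → ℝ => ∏ i, g (y i)) hFm
      rw [← key]
      have : ∀ p : ℝ × (Fin m → ℝ),
          (∏ i, g (((MeasurableEquiv.piFinSuccAbove (fun _ : Fin (m+1) => ℝ) 0).symm p) i))
            = g p.1 * ∏ j, g (p.2 j) := by
        intro p
        rw [Fin.prod_univ_succAbove _ 0]
        simp [MeasurableEquiv.piFinSuccAbove_symm_apply]
      simp only [this]
      rw [Measure.volume_eq_prod,
        lintegral_prod_mul (f := g) (g := fun w : Fin m → ℝ => ∏ j, g (w j)) hg.aemeasurable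
          (Finset.measurable_prod _ fun j _ => hg.comp (measurable_pi_apply j)).aemeasurable,
        ih, pow_succ, mul_comm]

lemma lintegral_succAbove_prod (g : ℝ → ℝ≥0∞) (hg : Measurable g) (m : ℕ) (i : Fin (m + 1))
    (z : ℝ) :
    ∫⁻ y : Fin (m + 1) → ℝ, (∏ j : Fin m, g (y (i.succAbove j))) * g (z - ∑ j, y j)
      = (∫⁻ t, g t) ^ (m + 1) := by
  have hmp := (volume_preserving_piFinSuccAbove (fun _ : Fin (m + 1) => ℝ) i)
  have hF : Measurable fun y : Fin (m + 1) → ℝ =>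
      (∏ j : Fin m, g (y (i.succAbove j))) * g (z - ∑ j, y j) := by
    refine Measurable.mul (Finset.measurable_prod _ fun j _ => hg.comp (measurable_pi_apply _)) ?_
    exact hg.comp (measurable_const.sub (Finset.measurable_sum _ fun j _ => measurable_pi_apply j))
  have key := (hmp.symm _).lintegral_comp (f := fun y : Fin (m + 1) → ℝ =>
      (∏ j : Fin m, g (y (i.succAbove j))) * g (z - ∑ j, y j)) hF
  rw [← key]
  have hcomp : ∀ p : ℝ × (Fin m → ℝ),
      (fun y : Fin (m + 1) → ℝ => (∏ j : Fin m, g (y (i.succAbove j))) * g (z - ∑ j, y j))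
          ((MeasurableEquiv.piFinSuccAbove (fun _ : Fin (m + 1) => ℝ) i).symm p)
        = (∏ j : Fin m, g (p.2 j)) * g ((z - ∑ j, p.2 j) - p.1) := by
    intro p
    simp only [MeasurableEquiv.piFinSuccAbove_symm_apply, Fin.insertNthEquiv_apply]
    rw [Fin.sum_univ_succAbove _ i]
    simp only [Fin.insertNth_apply_same, Fin.insertNth_apply_succAbove]
    ring_nf
  simp only [hcomp]
  have hG : Measurable fun p : ℝ × (Fin m → ℝ) =>
      (∏ j : Fin m, g (p.2 j)) * g ((z - ∑ j, p.2 j) - p.1) := by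
    refine Measurable.mul ?_ ?_
    · exact Finset.measurable_prod _ fun j _ =>
        hg.comp ((measurable_pi_apply j).comp measurable_snd)
    · exact hg.comp (((measurable_const.sub
        ((Finset.measurable_sum _ fun j _ => measurable_pi_apply j).comp measurable_snd))).sub
        measurable_fst)
  rw [Measure.volume_eq_prod, lintegral_prod_symm _ hG.aemeasurable]
  have inner : ∀ w : Fin m → ℝ,
      ∫⁻ x : ℝ, (∏ j : Fin m, g (w j)) * g ((z - ∑ j, w j) - x)
        = (∏ j : Fin m, g (w j)) * ∫⁻ t, g t := by
    intro w
    rw [lintegral_const_mul (f := fun x => g ((z - ∑ j, w j) - x)) _ (hg.comp (measurable_const.sub measurable_id))]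
    congr 1
    exact (Measure.measurePreserving_sub_left volume (z - ∑ j, w j)).lintegral_comp hg
  simp only [inner]
  rw [lintegral_mul_const (f := fun y : Fin m → ℝ => ∏ x, g (y x)) _ (Finset.measurable_prod _ fun j _ => hg.comp (measurable_pi_apply j)),
    lintegral_pi_prod g hg m, pow_succ]

lemma cube_le_three_pow : ∀ n : ℕ, n ^ 3 ≤ 3 ^ n := by
  intro n
  induction n with
  | zero => decide
  | succ k ih =>
    rcases Nat.lt_or_ge k 3 with h | h
    · interval_cases k <;> decide
    · have h1 : (k + 1) ^ 3 ≤ 3 * k ^ 3 := by nlinarith [h, sq_nonneg k, Nat.one_le_iff_ne_zero.mpr (by omega : k ≠ 0)]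
      calc (k + 1) ^ 3 ≤ 3 * k ^ 3 := h1
        _ ≤ 3 * 3 ^ k := Nat.mul_le_mul_left _ ih
        _ = 3 ^ (k + 1) := by rw [pow_succ]; ring

/-- For every `M > 0` there is a constant `C_M > 0` such that for every
integer `n ≥ 2` and every real `z ≥ n·M`,
`∫_{y_i ≥ M, Σ y_i ≤ z − M} 1/(y₁²⋯y_{n−1}² (z − Σ y_i)²) dy ≤ C_M ^ n / z²`. -/
theorem stmt13 :
    ∀ M : ℝ, 0 < M → ∃ C : ℝ, 0 < C ∧
      ∀ n : ℕ, 2 ≤ n → ∀ z : ℝ, (n : ℝ) * M ≤ z →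
        ∫⁻ y in {y : Fin (n - 1) → ℝ | (∀ i, M ≤ y i) ∧ (∑ i, y i) ≤ z - M},
            ENNReal.ofReal
              (1 / ((∏ i, (y i) ^ 2) * (z - ∑ i, y i) ^ 2)) ∂(volume)
          ≤ ENNReal.ofReal (C ^ n / z ^ 2) := by
  intro M hM
  refine ⟨3 * max 1 M⁻¹, by positivity, ?_⟩
  intro n hn z hz
  obtain ⟨k, rfl⟩ : ∃ k, n = k + 2 := ⟨n - 2, by omega⟩
  show (∫⁻ y in {y : Fin (k + 1) → ℝ | (∀ i, M ≤ y i) ∧ (∑ i, y i) ≤ z - M},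
        ENNReal.ofReal (1 / ((∏ i, (y i) ^ 2) * (z - ∑ i, y i) ^ 2)) ∂(volume))
      ≤ ENNReal.ofReal ((3 * max 1 M⁻¹) ^ (k + 2) / z ^ 2)
  push_cast at hz
  set C : ℝ := 3 * max 1 M⁻¹ with hCdef
  have hK2 : (0:ℝ) < (k:ℝ) + 2 := by positivity
  have hz0 : (0:ℝ) < z := lt_of_lt_of_le (by positivity) hz
  set q : ℝ := z / ((k:ℝ) + 2) with hqdef
  have hq : 0 < q := by positivity
  set g : ℝ → ℝ≥0∞ := gM M with hgdef
  have hg : Measurable g := gM_measurable M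
  set R : Set (Fin (k+1) → ℝ) :=
    {y : Fin (k + 1) → ℝ | (∀ i, M ≤ y i) ∧ (∑ i, y i) ≤ z - M} with hRdef
  have hR : MeasurableSet R := by
    have : R = (⋂ i, {y : Fin (k+1) → ℝ | M ≤ y i}) ∩
        {y : Fin (k+1) → ℝ | ∑ i, y i ≤ z - M} := by
      ext y; simp [hRdef, Set.mem_iInter]
    rw [this]
    exact (MeasurableSet.iInter fun i =>
        measurableSet_le measurable_const (measurable_pi_apply i)).inter
      (measurableSet_le (Finset.measurable_sum _ fun i _ => measurable_pi_apply i)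
        measurable_const)
  set f : (Fin (k+1) → ℝ) → ℝ≥0∞ := fun y =>
    ENNReal.ofReal (1 / ((∏ i, (y i) ^ 2) * (z - ∑ i, y i) ^ 2)) with hfdef
  set hB : (Fin (k+1) → ℝ) → ℝ≥0∞ := fun y =>
    ENNReal.ofReal (1 / q ^ 2) * ∏ i, g (y i) with hBdef
  set hA : Fin (k+1) → (Fin (k+1) → ℝ) → ℝ≥0∞ := fun i y =>
    ENNReal.ofReal (1 / q ^ 2) *
      ((∏ j : Fin k, g (y (i.succAbove j))) * g (z - ∑ j, y j)) with hAdef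
  -- pointwise bound
  have pointwise : ∀ y, R.indicator f y ≤ hB y + ∑ i, hA i y := by
    intro y
    by_cases hy : y ∈ R
    · rw [Set.indicator_of_mem hy]
      obtain ⟨hy1, hy2⟩ := hy
      have hyi : ∀ i, 0 < y i := fun i => lt_of_lt_of_le hM (hy1 i)
      have hT : M ≤ z - ∑ i, y i := by linarith [hy2]
      have hT0 : 0 < z - ∑ i, y i := lt_of_lt_of_le hM hT
      have hP : 0 < ∏ i, (y i) ^ 2 := Finset.prod_pos fun i _ => pow_pos (hyi i) 2
      have hcase : (q ≤ z - ∑ i, y i) ∨ ∃ i, q ≤ y i := by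
        by_contra hcon
        push_neg at hcon
        obtain ⟨h1, h2⟩ := hcon
        have hSlt : ∑ i, y i < ((k:ℝ) + 1) * q := by
          calc ∑ i, y i < ∑ _i : Fin (k+1), q :=
                Finset.sum_lt_sum_of_nonempty Finset.univ_nonempty (fun i _ => h2 i)
            _ = ((k:ℝ) + 1) * q := by
                rw [Finset.sum_const, Finset.card_univ, Fintype.card_fin, nsmul_eq_mul]
                push_cast
                ring
        have hzq : ((k:ℝ) + 2) * q = z := by
          rw [hqdef]; field_simp
        linarith
      rcases hcase with hcaseB | ⟨i, hcaseA⟩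
      · refine le_trans ?_ le_self_add
        have hgy : ∀ i, g (y i) = ENNReal.ofReal (1 / (y i) ^ 2) := fun i =>
          Set.indicator_of_mem (hy1 i) _
        rw [hBdef]
        simp only [hgy]
        rw [← ENNReal.ofReal_prod_of_nonneg (fun i _ => by positivity),
          ← ENNReal.ofReal_mul (by positivity)]
        apply ENNReal.ofReal_le_ofReal
        have hprodinv : (∏ i, 1 / (y i) ^ 2) = 1 / ∏ i, (y i) ^ 2 := by
          simp only [one_div]
          exact Finset.prod_inv_distrib _
        rw [hprodinv, div_mul_div_comm, one_mul]
        apply one_div_le_one_div_of_le (mul_pos (pow_pos hq 2) hP)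
        calc q ^ 2 * ∏ i, (y i) ^ 2 ≤ (z - ∑ i, y i) ^ 2 * ∏ i, (y i) ^ 2 := by
              have : q ^ 2 ≤ (z - ∑ i, y i) ^ 2 := pow_le_pow_left₀ hq.le hcaseB 2
              exact mul_le_mul_of_nonneg_right this hP.le
          _ = (∏ i, (y i) ^ 2) * (z - ∑ i, y i) ^ 2 := by ring
      · refine le_trans ?_ le_add_self
        refine le_trans ?_
          (Finset.single_le_sum (f := fun i' => hA i' y) (fun _ _ => zero_le)
            (Finset.mem_univ i))
        have hgy : ∀ j : Fin k, g (y (i.succAbove j))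
            = ENNReal.ofReal (1 / (y (i.succAbove j)) ^ 2) := fun j =>
          Set.indicator_of_mem (hy1 _) _
        have hgT : g (z - ∑ j, y j) = ENNReal.ofReal (1 / (z - ∑ j, y j) ^ 2) :=
          Set.indicator_of_mem hT _
        rw [hAdef]
        simp only [hgy, hgT]
        rw [← ENNReal.ofReal_prod_of_nonneg (fun j _ => by positivity),
          ← ENNReal.ofReal_mul (by positivity), ← ENNReal.ofReal_mul (by positivity)]
        apply ENNReal.ofReal_le_ofReal
        have hsplit : (∏ i', (y i') ^ 2)
            = (y i) ^ 2 * ∏ j : Fin k, (y (i.succAbove j)) ^ 2 :=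
          Fin.prod_univ_succAbove (fun i' => (y i') ^ 2) i
        have hprodinv : (∏ j : Fin k, 1 / (y (i.succAbove j)) ^ 2)
            = 1 / ∏ j : Fin k, (y (i.succAbove j)) ^ 2 := by
          simp only [one_div]
          exact Finset.prod_inv_distrib _
        have hP' : 0 < ∏ j : Fin k, (y (i.succAbove j)) ^ 2 :=
          Finset.prod_pos fun j _ => pow_pos (hyi _) 2
        rw [hprodinv, hsplit]
        rw [div_mul_div_comm, div_mul_div_comm, one_mul, one_mul]
        apply one_div_le_one_div_of_le
          (mul_pos (pow_pos hq 2) (mul_pos hP' (pow_pos hT0 2)))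
        have hqle : q ^ 2 ≤ (y i) ^ 2 := pow_le_pow_left₀ hq.le hcaseA 2
        calc q ^ 2 * ((∏ j : Fin k, (y (i.succAbove j)) ^ 2) * (z - ∑ j, y j) ^ 2)
            ≤ (y i) ^ 2 * ((∏ j : Fin k, (y (i.succAbove j)) ^ 2) * (z - ∑ j, y j) ^ 2) :=
              mul_le_mul_of_nonneg_right hqle
                (mul_nonneg hP'.le (sq_nonneg _))
          _ = ((y i) ^ 2 * ∏ j : Fin k, (y (i.succAbove j)) ^ 2) * (z - ∑ j, y j) ^ 2 := by
              ring
    · rw [Set.indicator_of_notMem hy]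
      exact zero_le
  -- measurability of dominating functions
  have hBmeas : Measurable hB := by
    apply Measurable.const_mul
    exact Finset.measurable_prod _ fun i _ => hg.comp (measurable_pi_apply i)
  have hAmeas : ∀ i, Measurable (hA i) := by
    intro i
    apply Measurable.const_mul
    refine Measurable.mul ?_ ?_
    · exact Finset.measurable_prod _ fun j _ => hg.comp (measurable_pi_apply _)
    · exact hg.comp (measurable_const.sub (Finset.measurable_sum _ fun j _ =>
        measurable_pi_apply j))
  -- integral values
  have hVB : ∫⁻ y, hB y = ENNReal.ofReal (1 / q ^ 2) * (ENNReal.ofReal M⁻¹) ^ (k + 1) := by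
    rw [hBdef]
    rw [lintegral_const_mul (f := fun y : Fin (k+1) → ℝ => ∏ i, g (y i)) _
      (Finset.measurable_prod _ fun i _ => hg.comp (measurable_pi_apply i)),
      lintegral_pi_prod g hg (k + 1), hgdef, lintegral_gM hM]
  have hVA : ∀ i, ∫⁻ y, hA i y
      = ENNReal.ofReal (1 / q ^ 2) * (ENNReal.ofReal M⁻¹) ^ (k + 1) := by
    intro i
    rw [hAdef]
    rw [lintegral_const_mul (f := fun y : Fin (k+1) → ℝ =>
        (∏ j : Fin k, g (y (i.succAbove j))) * g (z - ∑ j, y j)) _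
      (((Finset.measurable_prod _ fun j _ => hg.comp (measurable_pi_apply _))).mul
        (hg.comp (measurable_const.sub (Finset.measurable_sum _ fun j _ =>
          measurable_pi_apply j)))),
      lintegral_succAbove_prod g hg k i z, hgdef, lintegral_gM hM]
  -- main estimate
  have total : (∫⁻ y in R, f y)
      ≤ ((k + 2 : ℕ) : ℝ≥0∞) * (ENNReal.ofReal (1 / q ^ 2) * (ENNReal.ofReal M⁻¹) ^ (k + 1)) := by
    calc ∫⁻ y in R, f y = ∫⁻ y, R.indicator f y := (lintegral_indicator hR _).symm
      _ ≤ ∫⁻ y, (hB y + ∑ i, hA i y) := lintegral_mono pointwise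
      _ = (∫⁻ y, hB y) + ∫⁻ y, ∑ i, hA i y := lintegral_add_left hBmeas _
      _ = (∫⁻ y, hB y) + ∑ i, ∫⁻ y, hA i y := by
          rw [lintegral_finset_sum _ fun i _ => hAmeas i]
      _ = ((k + 2 : ℕ) : ℝ≥0∞) * (ENNReal.ofReal (1 / q ^ 2)
            * (ENNReal.ofReal M⁻¹) ^ (k + 1)) := by
          rw [hVB]
          simp only [hVA]
          rw [Finset.sum_const, Finset.card_univ, Fintype.card_fin]
          rw [nsmul_eq_mul]
          push_cast
          ring
  refine le_trans total ?_
  -- final real computation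
  have hrw : ((k + 2 : ℕ) : ℝ≥0∞) * (ENNReal.ofReal (1 / q ^ 2) * (ENNReal.ofReal M⁻¹) ^ (k + 1))
      = ENNReal.ofReal (((k:ℝ) + 2) * ((1 / q ^ 2) * M⁻¹ ^ (k + 1))) := by
    rw [← ENNReal.ofReal_natCast (k + 2), ← ENNReal.ofReal_pow (by positivity),
      ← ENNReal.ofReal_mul (by positivity), ← ENNReal.ofReal_mul (by positivity)]
    congr 1
    push_cast
    ring
  rw [hrw]
  apply ENNReal.ofReal_le_ofReal
  have hq2 : 1 / q ^ 2 = ((k:ℝ) + 2) ^ 2 / z ^ 2 := by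
    rw [hqdef]
    field_simp
  rw [hq2]
  have hcube : ((k:ℝ) + 2) ^ 3 ≤ 3 ^ (k + 2) := by
    have := cube_le_three_pow (k + 2)
    have h2 : (((k + 2 : ℕ) : ℝ)) ^ 3 ≤ ((3:ℝ)) ^ (k + 2) := by
      exact_mod_cast this
    push_cast at h2
    linarith [h2]
  have hMpow : M⁻¹ ^ (k + 1) ≤ (max 1 M⁻¹) ^ (k + 2) := by
    calc M⁻¹ ^ (k + 1) ≤ (max 1 M⁻¹) ^ (k + 1) :=
          pow_le_pow_left₀ (by positivity) (le_max_right 1 M⁻¹) (k + 1)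
      _ ≤ (max 1 M⁻¹) ^ (k + 2) :=
          pow_le_pow_right₀ (le_max_left 1 M⁻¹) (by omega)
  have core : ((k:ℝ) + 2) ^ 3 * M⁻¹ ^ (k + 1) ≤ C ^ (k + 2) := by
    rw [hCdef, mul_pow]
    exact mul_le_mul hcube hMpow (by positivity) (by positivity)
  calc ((k:ℝ) + 2) * (((k:ℝ) + 2) ^ 2 / z ^ 2 * M⁻¹ ^ (k + 1))
      = (((k:ℝ) + 2) ^ 3 * M⁻¹ ^ (k + 1)) / z ^ 2 := by ring
    _ ≤ C ^ (k + 2) / z ^ 2 := by gcongr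
end

section
/- Fix δ ∈ (0,1), γ ∈ (0,1) and M > 2/δ. Then t_k = (1 + o_k(1)) · ( γδ / (log k (log log k)²) )^{1/δ} as k → ∞, that is, lim_{k→∞} t_k · ( γδ / (log k (log log k)²) )^{−1/δ} = 1; consequently (γ/δ) t_k^{−δ} (log t_k)^{−2} = (1 + o_k(1)) log k, i.e. lim_{k→∞} (γ/δ) t_k^{−δ} (log t_k)^{−2} / log k = 1. -/
open MeasureTheory Set Filter
open scoped ENNReal Topology

/-- The measure `μ_U(dx) = (1/(k log k)) · γ (log x)^{−2} x^{−(1+δ)} 1{c < x ≤ e^{−M}} dx`. -/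
noncomputable def muU (δ γ M c : ℝ) (k : ℕ) : Measure ℝ :=
  volume.withDensity fun x =>
    ENNReal.ofReal (if c < x ∧ x ≤ Real.exp (-M) then
      γ / (((k : ℝ) * Real.log k) * (Real.log x) ^ 2 * x ^ (1 + δ)) else 0)

/-- `t_k := inf { t > 0 : μ_U([t,∞)) < 1/k }`. -/
noncomputable def tkk (δ γ M c : ℝ) (k : ℕ) : ℝ :=
  sInf {t : ℝ | 0 < t ∧ muU δ γ M c k (Set.Ici t) < ENNReal.ofReal (1 / (k : ℝ))}

noncomputable def ff (δ γ : ℝ) (x : ℝ) : ℝ := γ * ((Real.log x) ^ 2 * x ^ (1 + δ))⁻¹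
noncomputable def gg (δ γ : ℝ) (x : ℝ) : ℝ := 2 / (δ * Real.log x) * ff δ γ x
noncomputable def hh (δ γ : ℝ) (x : ℝ) : ℝ := γ / δ * x ^ (-δ) * ((Real.log x) ^ 2)⁻¹

variable {δ γ M : ℝ}

lemma hasDerivAt_hh (hδ : 0 < δ) {x : ℝ} (hx : 0 < x) (hx1 : x < 1) :
    HasDerivAt (hh δ γ) (-(ff δ γ x + gg δ γ x)) x := by
  have hlx : Real.log x < 0 := Real.log_neg hx hx1
  have hlx0 : Real.log x ≠ 0 := hlx.ne
  have h1 : HasDerivAt (fun y : ℝ => y ^ (-δ)) (-δ * x ^ (-δ - 1)) x :=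
    Real.hasDerivAt_rpow_const (Or.inl hx.ne')
  have hlog : HasDerivAt Real.log x⁻¹ x := Real.hasDerivAt_log hx.ne'
  have h2 : HasDerivAt (fun y : ℝ => (Real.log y) ^ 2) (2 * Real.log x * x⁻¹) x := by
    simpa using hlog.fun_pow 2
  have h3 : HasDerivAt (fun y : ℝ => ((Real.log y) ^ 2)⁻¹)
      (-(2 * Real.log x * x⁻¹) / ((Real.log x) ^ 2) ^ 2) x := h2.inv (pow_ne_zero 2 hlx0)
  have h4 := ((h1.mul h3).const_mul (γ / δ))
  have h5 : HasDerivAt (hh δ γ)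
      (γ / δ * (-δ * x ^ (-δ - 1) * ((Real.log x) ^ 2)⁻¹ +
        x ^ (-δ) * (-(2 * Real.log x * x⁻¹) / ((Real.log x) ^ 2) ^ 2))) x := by
    convert h4 using 2
    · rfl
    · rfl
    unfold hh; simp only [Pi.mul_apply]; ring
  convert h5 using 1
  have e1 : x ^ (-δ - 1) = (x ^ (1 + δ))⁻¹ := by
    rw [← Real.rpow_neg hx.le]; ring_nf
  have e2 : x ^ (-δ) = x * (x ^ (1 + δ))⁻¹ := by
    rw [show (-δ) = 1 + -(1 + δ) by ring, Real.rpow_add hx, Real.rpow_one,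
      Real.rpow_neg hx.le]
  have hP : (0:ℝ) < x ^ (1 + δ) := Real.rpow_pos_of_pos hx _
  simp only [ff, gg]
  rw [e1, e2]
  field_simp
  ring

lemma ff_pos (hγ : 0 < γ) {x : ℝ} (hx : 0 < x) (hx1 : x < 1) : 0 < ff δ γ x := by
  have hlx : Real.log x ≠ 0 := (Real.log_neg hx hx1).ne
  exact mul_pos hγ (inv_pos.2 (mul_pos (pow_two_pos_of_ne_zero hlx)
    (Real.rpow_pos_of_pos hx _)))

lemma ff_contOn {a b : ℝ} (ha : 0 < a) (hb : b < 1) :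
    ContinuousOn (ff δ γ) (Set.Icc a b) := by
  intro x hx
  have hx0 : 0 < x := lt_of_lt_of_le ha hx.1
  have hx1 : x < 1 := lt_of_le_of_lt hx.2 hb
  have hl : Real.log x ≠ 0 := (Real.log_neg hx0 hx1).ne
  have hP : x ^ ((1:ℝ) + δ) ≠ 0 := (Real.rpow_pos_of_pos hx0 _).ne'
  have : ContinuousAt (ff δ γ) x := by
    apply ContinuousAt.mul continuousAt_const
    apply ContinuousAt.inv₀
    · exact ContinuousAt.mul ((Real.continuousAt_log hx0.ne').pow 2)
        (Real.continuousAt_rpow_const _ _ (Or.inl hx0.ne'))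
    · exact mul_ne_zero (pow_ne_zero _ hl) hP
  exact this.continuousWithinAt

lemma gg_contOn (hδ : 0 < δ) {a b : ℝ} (ha : 0 < a) (hb : b < 1) :
    ContinuousOn (gg δ γ) (Set.Icc a b) := by
  apply ContinuousOn.mul _ (ff_contOn ha hb)
  intro x hx
  have hx0 : 0 < x := lt_of_lt_of_le ha hx.1
  have hx1 : x < 1 := lt_of_le_of_lt hx.2 hb
  have hl : Real.log x ≠ 0 := (Real.log_neg hx0 hx1).ne
  have : ContinuousAt (fun y : ℝ => 2 / (δ * Real.log y)) x := by
    apply ContinuousAt.div continuousAt_const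
    · exact continuousAt_const.mul (Real.continuousAt_log hx0.ne')
    · exact mul_ne_zero hδ.ne' hl
  exact this.continuousWithinAt

lemma ff_intble {a b : ℝ} (ha : 0 < min a b) (hb : max a b < 1) :
    IntervalIntegrable (ff δ γ) volume a b := by
  apply ContinuousOn.intervalIntegrable
  rw [Set.uIcc]
  exact ff_contOn ha hb

lemma ff_intble' {a b : ℝ} (ha : 0 < a) (hab : a ≤ b) (hb : b < 1) :
    IntervalIntegrable (ff δ γ) volume a b := by
  apply ContinuousOn.intervalIntegrable
  rw [Set.uIcc_of_le hab]
  exact ff_contOn ha hb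

lemma gg_intble' (hδ : 0 < δ) {a b : ℝ} (ha : 0 < a) (hab : a ≤ b) (hb : b < 1) :
    IntervalIntegrable (gg δ γ) volume a b := by
  apply ContinuousOn.intervalIntegrable
  rw [Set.uIcc_of_le hab]
  exact gg_contOn hδ ha hb

/-- FTC. -/
lemma integral_ff_add_gg (hδ : 0 < δ) {a b : ℝ} (ha : 0 < a) (hab : a ≤ b) (hb : b < 1) :
    ∫ x in a..b, (ff δ γ x + gg δ γ x) = hh δ γ a - hh δ γ b := by
  have key : ∫ x in a..b, -(ff δ γ x + gg δ γ x) = hh δ γ b - hh δ γ a := by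
    apply intervalIntegral.integral_eq_sub_of_hasDerivAt
    · intro x hx
      rw [Set.uIcc_of_le hab] at hx
      exact hasDerivAt_hh hδ (lt_of_lt_of_le ha hx.1) (lt_of_le_of_lt hx.2 hb)
    · exact ((ff_intble' ha hab hb).add (gg_intble' hδ ha hab hb)).neg
  rw [intervalIntegral.integral_neg] at key
  linarith

lemma integral_ff_bounds (hδ : 0 < δ) (hγ : 0 < γ) {L a b : ℝ} (hL : 0 < L) (ha : 0 < a)
    (hab : a ≤ b) (hb : b ≤ Real.exp (-L)) :
    hh δ γ a - hh δ γ b ≤ ∫ x in a..b, ff δ γ x ∧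
      (1 - 2 / (δ * L)) * ∫ x in a..b, ff δ γ x ≤ hh δ γ a - hh δ γ b := by
  have hb1 : b < 1 := lt_of_le_of_lt hb (Real.exp_lt_one_iff.mpr (by linarith))
  have key : ∀ x ∈ Set.Icc a b, (-(2 / (δ * L)) * ff δ γ x ≤ gg δ γ x ∧ gg δ γ x ≤ 0) := by
    intro x hx
    have hx0 : 0 < x := lt_of_lt_of_le ha hx.1
    have hx1 : x < 1 := lt_of_le_of_lt hx.2 hb1
    have hlx : Real.log x ≤ -L := by
      calc Real.log x ≤ Real.log (Real.exp (-L)) :=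
            Real.log_le_log hx0 (hx.2.trans hb)
        _ = -L := Real.log_exp _
    have hffpos : 0 < ff δ γ x := ff_pos hγ hx0 hx1
    have hu : δ * Real.log x < 0 := mul_neg_of_pos_of_neg hδ (by linarith)
    have huv : δ * Real.log x ≤ -(δ * L) := by nlinarith
    have hv : 0 < δ * L := mul_pos hδ hL
    constructor
    · have hco : -(2 / (δ * L)) ≤ 2 / (δ * Real.log x) := by
        have hlx0 : Real.log x ≠ 0 := ne_of_lt (by linarith)
        have hdiff : 2 / (δ * Real.log x) - (-(2 / (δ * L))) =
            2 * ((δ * Real.log x) + (δ * L)) / ((δ * Real.log x) * (δ * L)) := by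
          field_simp [hδ.ne', hL.ne', hlx0]
          ring
        have hnum : 2 * ((δ * Real.log x) + (δ * L)) ≤ 0 := by linarith
        have hden : (δ * Real.log x) * (δ * L) ≤ 0 := by nlinarith
        have := div_nonneg_of_nonpos hnum hden
        linarith
      exact mul_le_mul_of_nonneg_right hco hffpos.le
    · exact mul_nonpos_of_nonpos_of_nonneg
        (le_of_lt (div_neg_of_pos_of_neg two_pos hu)) hffpos.le
  have hffI := ff_intble' (δ := δ) (γ := γ) ha hab hb1
  have hggI := gg_intble' (δ := δ) (γ := γ) hδ ha hab hb1
  have hFTC := integral_ff_add_gg (δ := δ) (γ := γ) hδ ha hab hb1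
  rw [intervalIntegral.integral_add hffI hggI] at hFTC
  have h1 : ∫ x in a..b, gg δ γ x ≤ 0 := by
    have h0 : (0:ℝ) = ∫ _x in a..b, (0:ℝ) := by simp
    rw [h0]
    exact intervalIntegral.integral_mono_on hab hggI intervalIntegrable_const
      (fun x hx => (key x hx).2)
  have h2 : -(2 / (δ * L)) * (∫ x in a..b, ff δ γ x) ≤ ∫ x in a..b, gg δ γ x := by
    have := intervalIntegral.integral_mono_on hab (hffI.const_mul (-(2 / (δ * L)))) hggI
      (fun x hx => (key x hx).1)
    rwa [intervalIntegral.integral_const_mul] at this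
  constructor
  · linarith
  · nlinarith [h2]

lemma hh_tendsto_atTop (hδ : 0 < δ) (hγ : 0 < γ) :
    Tendsto (hh δ γ) (nhdsWithin 0 (Set.Ioi 0)) atTop := by
  have h1 : Tendsto (fun x : ℝ => -Real.log x) (nhdsWithin 0 (Set.Ioi 0)) atTop := by
    have := Real.tendsto_log_nhdsGT_zero
    exact tendsto_neg_atBot_atTop.comp this
  have h2 : Tendsto (fun u : ℝ => γ / δ * (Real.exp (δ * u) / u ^ (2:ℝ)))
      atTop atTop :=
    (tendsto_exp_mul_div_rpow_atTop 2 δ hδ).const_mul_atTop (div_pos hγ hδ)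
  apply (h2.comp h1).congr'
  filter_upwards [self_mem_nhdsWithin, Ioo_mem_nhdsGT_of_mem
    (Set.mem_Ico.mpr ⟨le_refl (0:ℝ), one_pos⟩)] with x hx hxo
  have hx0 : 0 < x := hx
  have hlx : 0 < -Real.log x := by
    have := Real.log_neg hx0 hxo.2
    linarith
  simp only [Function.comp_apply, hh]
  rw [Real.rpow_two]
  rw [show Real.exp (δ * -Real.log x) = x ^ (-δ) by
    rw [Real.rpow_def_of_pos hx0]; ring_nf]
  rw [neg_sq]
  ring

lemma hh_pos (hδ : 0 < δ) (hγ : 0 < γ) {x : ℝ} (hx : 0 < x) (hx1 : x < 1) :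
    0 < hh δ γ x := by
  have hlx : Real.log x ≠ 0 := (Real.log_neg hx hx1).ne
  exact mul_pos (mul_pos (div_pos hγ hδ) (Real.rpow_pos_of_pos hx _))
    (inv_pos.2 (pow_two_pos_of_ne_zero hlx))

noncomputable def G (δ γ M : ℝ) (t : ℝ) : ℝ := ∫ x in t..(Real.exp (-M)), ff δ γ x

lemma G_div_hh_bound (hδ : 0 < δ) (hγ : 0 < γ) (hM : 0 < M) {ε : ℝ} (hε : 0 < ε)
    {L : ℝ} (hLM : M ≤ L) (hL4 : 4 / δ ≤ L) (hL8 : 8 / (δ * ε) ≤ L) :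
    ∀ᶠ t in nhdsWithin 0 (Set.Ioi 0), dist (G δ γ M t / hh δ γ t) 1 < ε := by
  have hL0 : 0 < L := lt_of_lt_of_le hM hLM
  set η : ℝ := 2 / (δ * L) with hηdef
  have hη0 : 0 < η := div_pos two_pos (mul_pos hδ hL0)
  have hη2 : η ≤ 1 / 2 := by
    rw [hηdef, div_le_div_iff₀ (mul_pos hδ hL0) two_pos]
    have : 4 / δ * δ ≤ L * δ := mul_le_mul_of_nonneg_right hL4 hδ.le
    rw [div_mul_cancel₀] at this
    · linarith
    · exact hδ.ne'
  have hηε : η ≤ ε / 4 := by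
    rw [hηdef, div_le_div_iff₀ (mul_pos hδ hL0) (by norm_num : (0:ℝ) < 4)]
    have : 8 / (δ * ε) * (δ * ε) ≤ L * (δ * ε) :=
      mul_le_mul_of_nonneg_right hL8 (mul_pos hδ hε).le
    rw [div_mul_cancel₀] at this
    · nlinarith
    · exact (mul_pos hδ hε).ne'
  clear_value η
  set T := Real.exp (-L) with hTdef
  have hT0 : 0 < T := Real.exp_pos _
  have hT1 : T < 1 := Real.exp_lt_one_iff.mpr (by linarith)
  have hTM : T ≤ Real.exp (-M) := Real.exp_le_exp.mpr (by linarith)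
  have hM1 : Real.exp (-M) < 1 := Real.exp_lt_one_iff.mpr (by linarith)
  have hGT : 0 ≤ G δ γ M T :=
    intervalIntegral.integral_nonneg hTM
      (fun x hx => (ff_pos hγ (lt_of_lt_of_le hT0 hx.1) (lt_of_le_of_lt hx.2 hM1)).le)
  have hhT : 0 < hh δ γ T := hh_pos hδ hγ hT0 hT1
  set C := hh δ γ T + G δ γ M T with hCdef
  have hC0 : 0 < C := by positivity
  clear_value C
  filter_upwards [Ioo_mem_nhdsGT_of_mem (Set.mem_Ico.mpr ⟨le_refl (0:ℝ), hT0⟩),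
    (hh_tendsto_atTop hδ hγ).eventually (eventually_ge_atTop (max 1 (4 * C / ε)))]
    with t ht hht
  have ht0 : 0 < t := ht.1
  have htT : t ≤ T := ht.2.le
  set H := hh δ γ t with hHdef
  have hH1 : 1 ≤ H := le_trans (le_max_left _ _) hht
  have hHC : 4 * C / ε ≤ H := le_trans (le_max_right _ _) hht
  have hHpos : 0 < H := lt_of_lt_of_le one_pos hH1
  have hCH : C ≤ ε * H / 4 := by
    rw [div_le_iff₀ hε] at hHC
    linarith
  clear_value H
  set I := ∫ x in t..T, ff δ γ x with hIdef
  clear_value I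
  have hbnds := integral_ff_bounds (γ := γ) hδ hγ hL0 ht0 htT (le_refl T)
  have hb1 : H - hh δ γ T ≤ I := by rw [hHdef, hIdef]; exact hbnds.1
  have hb2 : (1 - η) * I ≤ H - hh δ γ T := by rw [hHdef, hIdef, hηdef]; exact hbnds.2
  clear hbnds
  have hInn : 0 ≤ I := by
    rw [hIdef]
    exact intervalIntegral.integral_nonneg htT
      (fun x hx => (ff_pos hγ (lt_of_lt_of_le ht0 hx.1) (lt_of_le_of_lt hx.2 hT1)).le)
  have hsplit : G δ γ M t = I + G δ γ M T := by
    rw [hIdef, G, G, intervalIntegral.integral_add_adjacent_intervals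
      (ff_intble' ht0 htT hT1) (ff_intble' hT0 hTM hM1)]
  set GT := G δ γ M T with hGTdef
  set Gt := G δ γ M t with hGtdef
  clear_value GT Gt
  have e1 : (1 - η) * I = I - η * I := by ring
  rw [e1] at hb2
  have hI3 : I ≤ H + η * I := by linarith
  have p1 : η * I ≤ (1 / 2 : ℝ) * I := mul_le_mul_of_nonneg_right hη2 hInn
  have hI2 : I ≤ 2 * H := by linarith
  have p2 : η * I ≤ η * (2 * H) := mul_le_mul_of_nonneg_left hI2 hη0.le
  have p3 : η * (2 * H) ≤ ε / 4 * (2 * H) :=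
    mul_le_mul_of_nonneg_right hηε (by linarith)
  have e2 : ε / 4 * (2 * H) = ε * H / 2 := by ring
  have e3 : 3 * ε / 4 * H = ε * H / 2 + ε * H / 4 := by ring
  have hup : Gt - H ≤ 3 * ε / 4 * H := by linarith
  have hlo : -(3 * ε / 4 * H) ≤ Gt - H := by
    linarith [mul_nonneg hε.le hHpos.le]
  have habs : |Gt - H| ≤ 3 * ε / 4 * H := abs_le.mpr ⟨hlo, hup⟩
  rw [Real.dist_eq, div_sub_one hHpos.ne',
    abs_div, abs_of_pos hHpos, div_lt_iff₀ hHpos]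
  calc |Gt - H| ≤ 3 * ε / 4 * H := habs
    _ < ε * H := by
      have := mul_pos hε hHpos
      linarith

lemma G_div_hh_tendsto (hδ : 0 < δ) (hγ : 0 < γ) (hM : 0 < M) :
    Tendsto (fun t => G δ γ M t / hh δ γ t) (nhdsWithin 0 (Set.Ioi 0)) (nhds 1) := by
  rw [Metric.tendsto_nhds]
  intro ε hε
  exact G_div_hh_bound hδ hγ hM hε (le_max_left _ _)
    (le_trans (le_max_left _ _) (le_max_right _ _))
    (le_trans (le_max_right _ _) (le_max_right _ _))

lemma log_k_pos {k : ℕ} (hk : 2 ≤ k) : 0 < Real.log k := by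
  have : (2:ℝ) ≤ k := by exact_mod_cast hk
  exact Real.log_pos (by linarith)

lemma K_pos {k : ℕ} (hk : 2 ≤ k) : 0 < (k : ℝ) * Real.log k := by
  have : (2:ℝ) ≤ k := by exact_mod_cast hk
  exact mul_pos (by linarith) (log_k_pos hk)

lemma density_eq (δ γ M c : ℝ) (k : ℕ) :
    (fun x => ENNReal.ofReal (if c < x ∧ x ≤ Real.exp (-M) then
      γ / (((k : ℝ) * Real.log k) * (Real.log x) ^ 2 * x ^ (1 + δ)) else 0)) =
    fun x => Set.indicator (Set.Ioc c (Real.exp (-M)))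
      (fun y => ENNReal.ofReal (ff δ γ y / ((k : ℝ) * Real.log k))) x := by
  funext x
  rw [Set.indicator_apply]
  simp only [Set.mem_Ioc]
  split_ifs with h
  · congr 1
    simp only [ff, div_eq_mul_inv, mul_inv]
    ring
  · simp

lemma tail_formula (hδ : 0 < δ) (hγ : 0 < γ) (hM : 0 < M) {c t : ℝ} {k : ℕ} (hk : 2 ≤ k)
    (hc : 0 < c) (hct : c ≤ t) (ht : t ≤ Real.exp (-M)) :
    muU δ γ M c k (Set.Ici t) =
      ENNReal.ofReal ((∫ x in t..(Real.exp (-M)), ff δ γ x) / ((k : ℝ) * Real.log k)) := by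
  have hK : 0 < (k : ℝ) * Real.log k := K_pos hk
  have hB1 : Real.exp (-M) < 1 := Real.exp_lt_one_iff.mpr (by linarith)
  have ht0 : 0 < t := lt_of_lt_of_le hc hct
  rw [muU, withDensity_apply _ measurableSet_Ici, density_eq]
  rw [lintegral_indicator measurableSet_Ioc, Measure.restrict_restrict measurableSet_Ioc]
  have hne : ∀ᵐ x : ℝ, x ≠ t := by
    rw [MeasureTheory.ae_iff]
    simp only [ne_eq, not_not]
    rw [show {x : ℝ | x = t} = {t} from Set.setOf_eq_eq_singleton]
    exact Real.volume_singleton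
  have hset : volume.restrict (Set.Ioc c (Real.exp (-M)) ∩ Set.Ici t) =
      volume.restrict (Set.Ioc t (Real.exp (-M))) := by
    apply Measure.restrict_congr_set
    filter_upwards [hne] with x hx
    simp only [Set.mem_inter_iff, Set.mem_Ioc, Set.mem_Ici, eq_iff_iff]
    constructor
    · rintro ⟨⟨_, h2⟩, h3⟩
      exact ⟨lt_of_le_of_ne h3 (Ne.symm hx), h2⟩
    · rintro ⟨h1, h2⟩
      exact ⟨⟨lt_of_le_of_lt hct h1, h2⟩, h1.le⟩
  rw [hset]
  have hint : Integrable (fun x => ff δ γ x / ((k : ℝ) * Real.log k))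
      (volume.restrict (Set.Ioc t (Real.exp (-M)))) := by
    have := (ff_intble' (δ := δ) (γ := γ) ht0 ht hB1).div_const ((k : ℝ) * Real.log k)
    rwa [intervalIntegrable_iff_integrableOn_Ioc_of_le ht] at this
  have hnn : 0 ≤ᵐ[volume.restrict (Set.Ioc t (Real.exp (-M)))]
      fun x => ff δ γ x / ((k : ℝ) * Real.log k) := by
    refine (ae_restrict_iff' measurableSet_Ioc).mpr (ae_of_all _ fun x hx => ?_)
    exact div_nonneg (ff_pos hγ (lt_of_lt_of_le ht0 hx.1.le) (lt_of_le_of_lt hx.2 hB1)).le hK.le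
  rw [← MeasureTheory.ofReal_integral_eq_lintegral_ofReal hint hnn]
  congr 1
  rw [MeasureTheory.integral_div, intervalIntegral.integral_of_le ht]

lemma muU_Ici_c (δ γ : ℝ) {M c : ℝ} (k : ℕ) (hc : 0 < c) :
    muU δ γ M c k (Set.Ici c) = muU δ γ M c k Set.univ := by
  have h0 : muU δ γ M c k (Set.Iio c) = 0 := by
    rw [muU, withDensity_apply _ measurableSet_Iio]
    rw [MeasureTheory.setLIntegral_congr_fun measurableSet_Iio
      (fun x hx => ?_), lintegral_zero]
    have : ¬(c < x ∧ x ≤ Real.exp (-M)) := fun hcon => absurd hcon.1 (not_lt.mpr hx.le)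
    rw [if_neg this, ENNReal.ofReal_zero]
  have hu : Set.Iio c ∪ Set.Ici c = Set.univ := Set.Iio_union_Ici
  rw [← hu, measure_union (Set.Iio_disjoint_Ici le_rfl) measurableSet_Ici, h0, zero_add]

lemma total_mass (hδ : 0 < δ) (hγ : 0 < γ) (hM : 0 < M) {c : ℝ} {k : ℕ} (hk : 2 ≤ k)
    (hc : 0 < c) (hcM : c < Real.exp (-M))
    (hprob : IsProbabilityMeasure (muU δ γ M c k)) :
    G δ γ M c = (k : ℝ) * Real.log k := by
  have h1 : muU δ γ M c k (Set.Ici c) = 1 := by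
    rw [muU_Ici_c δ γ k hc]
    exact hprob.measure_univ
  rw [tail_formula hδ hγ hM hk hc le_rfl hcM.le, ENNReal.ofReal_eq_one] at h1
  have hK := K_pos hk
  rw [div_eq_one_iff_eq hK.ne'] at h1
  exact h1

lemma G_antitone (hδ : 0 < δ) (hγ : 0 < γ) (hM : 0 < M) {a b : ℝ} (ha : 0 < a) (hab : a ≤ b)
    (hb : b < 1) : G δ γ M b ≤ G δ γ M a := by
  have hM1 : Real.exp (-M) < 1 := Real.exp_lt_one_iff.mpr (by linarith)
  have hsplit : (∫ x in a..b, ff δ γ x) + G δ γ M b = G δ γ M a := by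
    rw [G, G]
    apply intervalIntegral.integral_add_adjacent_intervals (ff_intble' ha hab hb)
    apply ff_intble (δ := δ) (γ := γ)
    · simp only [lt_min_iff]
      exact ⟨lt_of_lt_of_le ha hab, Real.exp_pos _⟩
    · simp only [max_lt_iff]
      exact ⟨hb, hM1⟩
  have hnn : 0 ≤ ∫ x in a..b, ff δ γ x :=
    intervalIntegral.integral_nonneg hab
      (fun x hx => (ff_pos hγ (lt_of_lt_of_le ha hx.1) (lt_of_le_of_lt hx.2 hb)).le)
  linarith

lemma tk_le (hδ : 0 < δ) (hγ : 0 < γ) (hM : 0 < M) {c b : ℝ} {k : ℕ} (hk : 2 ≤ k)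
    (hc : 0 < c) (hcM : c < Real.exp (-M))
    (hprob : IsProbabilityMeasure (muU δ γ M c k))
    (hb : 0 < b) (hbM : b ≤ Real.exp (-M)) (hGb : G δ γ M b < Real.log k) :
    tkk δ γ M c k ≤ b := by
  have hK := K_pos hk
  have hlk := log_k_pos hk
  have hk2 : (2:ℝ) ≤ k := by exact_mod_cast hk
  have hM1 : Real.exp (-M) < 1 := Real.exp_lt_one_iff.mpr (by linarith)
  have hcb : c < b := by
    by_contra hcon
    push_neg at hcon
    have := G_antitone hδ hγ hM hb hcon (lt_trans hcM hM1)
    rw [total_mass hδ hγ hM hk hc hcM hprob] at this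
    nlinarith
  apply csInf_le ⟨0, fun x hx => hx.1.le⟩
  refine ⟨hb, ?_⟩
  rw [tail_formula hδ hγ hM hk hc hcb.le hbM]
  apply ENNReal.ofReal_lt_ofReal_iff (by positivity) |>.mpr
  rw [div_lt_div_iff₀ hK (by positivity : (0:ℝ) < k)]
  have : G δ γ M b * k < Real.log k * k := by
    apply mul_lt_mul_of_pos_right hGb (by positivity)
  calc G δ γ M b * (k:ℝ) < Real.log k * k := this
    _ = 1 * ((k:ℝ) * Real.log k) := by ring
  -- note: goal was G b * k < 1 * (k * log k)

lemma le_tk (hδ : 0 < δ) (hγ : 0 < γ) (hM : 0 < M) {c a : ℝ} {k : ℕ} (hk : 2 ≤ k)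
    (hc : 0 < c) (hcM : c < Real.exp (-M))
    (hprob : IsProbabilityMeasure (muU δ γ M c k))
    (ha : 0 < a) (haM : a ≤ Real.exp (-M)) (hGa : Real.log k ≤ G δ γ M a) :
    a ≤ tkk δ γ M c k := by
  have hK := K_pos hk
  have hlk := log_k_pos hk
  have hk2 : (2:ℝ) ≤ k := by exact_mod_cast hk
  have hM1 : Real.exp (-M) < 1 := Real.exp_lt_one_iff.mpr (by linarith)
  have hone : muU δ γ M c k Set.univ = 1 := hprob.measure_univ
  apply le_csInf
  · -- nonempty: t = 1 works
    refine ⟨1, one_pos, ?_⟩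
    have h0 : muU δ γ M c k (Set.Ici 1) = 0 := by
      rw [muU, withDensity_apply _ measurableSet_Ici]
      rw [MeasureTheory.setLIntegral_congr_fun measurableSet_Ici
        (fun x hx => ?_), lintegral_zero]
      have hxge : (1:ℝ) ≤ x := hx
      have : ¬(c < x ∧ x ≤ Real.exp (-M)) := by
        rintro ⟨_, h2⟩
        exact absurd (lt_of_le_of_lt (hxge.trans h2) hM1) (lt_irrefl _)
      rw [if_neg this, ENNReal.ofReal_zero]
    rw [h0]
    exact ENNReal.ofReal_pos.mpr (by positivity)
  · rintro x ⟨hx0, hxlt⟩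
    by_contra hcon
    push_neg at hcon
    -- x < a; show tail x ≥ 1/k, contradiction
    have htail : ENNReal.ofReal (1 / (k : ℝ)) ≤ muU δ γ M c k (Set.Ici x) := by
      rcases le_or_gt a c with hac | hca
      · -- a ≤ c : Ici x ⊇ Ici c  and μ (Ici c) = 1
        have h1 : muU δ γ M c k (Set.Ici c) = 1 := by
          rw [muU_Ici_c δ γ k hc]; exact hone
        have hmono : muU δ γ M c k (Set.Ici c) ≤ muU δ γ M c k (Set.Ici x) :=
          measure_mono (Set.Ici_subset_Ici.mpr (by linarith))
        rw [h1] at hmono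
        refine le_trans ?_ hmono
        rw [← ENNReal.ofReal_one]
        apply ENNReal.ofReal_le_ofReal
        rw [div_le_one (by positivity)]
        linarith
      · -- c < a
        have hmono : muU δ γ M c k (Set.Ici a) ≤ muU δ γ M c k (Set.Ici x) :=
          measure_mono (Set.Ici_subset_Ici.mpr hcon.le)
        refine le_trans ?_ hmono
        rw [tail_formula hδ hγ hM hk hc hca.le haM]
        apply ENNReal.ofReal_le_ofReal
        rw [div_le_div_iff₀ (by positivity : (0:ℝ) < k) hK]
        calc 1 * ((k:ℝ) * Real.log k) = Real.log k * k := by ring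
          _ ≤ G δ γ M a * k := by
            apply mul_le_mul_of_nonneg_right hGa (by positivity)
    exact absurd hxlt (not_lt.mpr htail)

lemma hh_antitone (hδ : 0 < δ) (hγ : 0 < γ) (hM : 2 / δ < M) {x y : ℝ} (hx : 0 < x)
    (hxy : x ≤ y) (hy : y ≤ Real.exp (-M)) : hh δ γ y ≤ hh δ γ x := by
  have hM0 : 0 < M := lt_trans (by positivity) hM
  have hB1 : Real.exp (-M) < 1 := Real.exp_lt_one_iff.mpr (by linarith)
  set B := Real.exp (-M) with hBdef
  have hsa : StrictAntiOn (hh δ γ) (Set.Ioc 0 B) := by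
    apply strictAntiOn_of_deriv_neg (convex_Ioc 0 B)
    · intro z hz
      have hz0 : 0 < z := hz.1
      have hz1 : z < 1 := lt_of_le_of_lt hz.2 hB1
      exact (hasDerivAt_hh hδ hz0 hz1).continuousAt.continuousWithinAt
    · intro z hz
      rw [interior_Ioc] at hz
      have hz0 : 0 < z := hz.1
      have hz1 : z < 1 := lt_trans hz.2 hB1
      rw [(hasDerivAt_hh hδ hz0 hz1).deriv]
      have hlz : Real.log z < -M := by
        calc Real.log z < Real.log B := Real.log_lt_log hz0 hz.2
          _ = -M := Real.log_exp _
      have hu : δ * Real.log z < -2 := by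
        have h1 : δ * (2 / δ) < δ * M := mul_lt_mul_of_pos_left hM hδ
        rw [mul_div_cancel₀ _ hδ.ne'] at h1
        nlinarith
      have hfrac : 0 < 1 + 2 / (δ * Real.log z) := by
        have h2 : (0:ℝ) < (2 + δ * Real.log z) / (δ * Real.log z) :=
          div_pos_of_neg_of_neg (by linarith) (by linarith)
        have hne : δ * Real.log z ≠ 0 := by nlinarith
        have h3 : (2 + δ * Real.log z) / (δ * Real.log z) = 2 / (δ * Real.log z) + 1 := by
          rw [add_div, div_self hne]
        linarith
      have hffz : 0 < ff δ γ z := ff_pos hγ hz0 hz1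
      have hsum : ff δ γ z + gg δ γ z = ff δ γ z * (1 + 2 / (δ * Real.log z)) := by
        rw [gg]; ring
      rw [hsum]
      have := mul_pos hffz hfrac
      linarith
  rcases eq_or_lt_of_le hxy with rfl | hlt
  · exact le_refl _
  · exact (hsa ⟨hx, le_trans hxy hy⟩ ⟨lt_of_lt_of_le hx hxy, hy⟩ hlt).le
    -- membership order: x then y

noncomputable def aak (δ γ : ℝ) (k : ℕ) : ℝ :=
  (γ * δ / (Real.log k * (Real.log (Real.log k)) ^ 2)) ^ (1 / δ : ℝ)

lemma tendsto_lk : Tendsto (fun k : ℕ => Real.log k) atTop atTop :=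
  Real.tendsto_log_atTop.comp tendsto_natCast_atTop_atTop

lemma tendsto_llk : Tendsto (fun k : ℕ => Real.log (Real.log k)) atTop atTop :=
  Real.tendsto_log_atTop.comp tendsto_lk

lemma tendsto_A (hδ : 0 < δ) (hγ : 0 < γ) :
    Tendsto (fun k : ℕ => γ * δ / (Real.log k * (Real.log (Real.log k)) ^ 2))
      atTop (nhds 0) := by
  apply Tendsto.div_atTop tendsto_const_nhds
  exact tendsto_lk.atTop_mul_atTop₀ (tendsto_llk.atTop_mul_atTop₀ tendsto_llk |>.congr
    (fun k => by ring))

lemma eventually_A_pos (hδ : 0 < δ) (hγ : 0 < γ) :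
    ∀ᶠ k : ℕ in atTop, 0 < γ * δ / (Real.log k * (Real.log (Real.log k)) ^ 2) := by
  filter_upwards [tendsto_lk.eventually (eventually_gt_atTop 0),
    tendsto_llk.eventually (eventually_gt_atTop 0)] with k h1 h2
  positivity

lemma tendsto_aak (hδ : 0 < δ) (hγ : 0 < γ) :
    Tendsto (aak δ γ) atTop (nhds 0) := by
  have hc : ContinuousAt (fun y : ℝ => y ^ (1 / δ : ℝ)) 0 :=
    Real.continuousAt_rpow_const 0 _ (Or.inr (by positivity))
  have := hc.tendsto.comp (tendsto_A hδ hγ)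
  rw [Real.zero_rpow (by positivity : (1/δ:ℝ) ≠ 0)] at this
  exact this

lemma eventually_aak_pos (hδ : 0 < δ) (hγ : 0 < γ) :
    ∀ᶠ k : ℕ in atTop, 0 < aak δ γ k := by
  filter_upwards [eventually_A_pos hδ hγ] with k hk
  exact Real.rpow_pos_of_pos hk _

lemma loglim (hδ : 0 < δ) (hγ : 0 < γ) {s : ℝ} (hs : 0 < s) :
    Tendsto (fun k : ℕ => δ * Real.log (s * aak δ γ k) / Real.log (Real.log k))
      atTop (nhds (-1)) := by
  have hlim : Tendsto (fun k : ℕ =>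
      (δ * Real.log s + Real.log (γ * δ)) / Real.log (Real.log k) - 1 -
        2 * (Real.log (Real.log (Real.log k)) / Real.log (Real.log k)))
      atTop (nhds (-1)) := by
    have h1 : Tendsto (fun k : ℕ =>
        (δ * Real.log s + Real.log (γ * δ)) / Real.log (Real.log k)) atTop (nhds 0) :=
      Tendsto.div_atTop tendsto_const_nhds tendsto_llk
    have h2 : Tendsto (fun k : ℕ =>
        Real.log (Real.log (Real.log k)) / Real.log (Real.log k)) atTop (nhds 0) := by
      have hlo : Tendsto (fun x : ℝ => Real.log x / x) atTop (nhds 0) :=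
        Real.isLittleO_log_id_atTop.tendsto_div_nhds_zero
      exact hlo.comp tendsto_llk
    have h3 := (h1.sub (tendsto_const_nhds (x := (1:ℝ)))).sub (h2.const_mul 2)
    norm_num at h3
    exact h3
  apply hlim.congr'
  filter_upwards [tendsto_lk.eventually (eventually_gt_atTop 1),
    tendsto_llk.eventually (eventually_gt_atTop 0),
    eventually_A_pos hδ hγ] with k hlk hllk hA
  set A := γ * δ / (Real.log k * (Real.log (Real.log k)) ^ 2) with hAdef
  have hlkpos : (0:ℝ) < Real.log k := by linarith
  have haA : aak δ γ k = A ^ (1 / δ : ℝ) := rfl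
  have hlogA : Real.log A = Real.log (γ * δ) - Real.log (Real.log k) -
      2 * Real.log (Real.log (Real.log k)) := by
    rw [hAdef, Real.log_div (by positivity) (by positivity),
      Real.log_mul hlkpos.ne' (by positivity), Real.log_pow]
    push_cast
    ring
  have hloga : Real.log (aak δ γ k) = (1 / δ) * Real.log A := by
    rw [haA, Real.log_rpow hA]
  have hane : aak δ γ k ≠ 0 := by
    rw [haA]; exact (Real.rpow_pos_of_pos hA _).ne'
  have hlogsa : Real.log (s * aak δ γ k) = Real.log s + (1 / δ) * Real.log A := by
    rw [Real.log_mul hs.ne' hane, hloga]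
  rw [hlogsa, hlogA]
  field_simp
  ring

lemma ratio_limit (hδ : 0 < δ) (hγ : 0 < γ) {s : ℝ} (hs : 0 < s) :
    Tendsto (fun k : ℕ => hh δ γ (s * aak δ γ k) / Real.log k) atTop
      (nhds (s ^ (-δ : ℝ))) := by
  have hq := loglim hδ hγ (γ := γ) hs
  have hqinv : Tendsto (fun k : ℕ =>
      (Real.log (Real.log k) / (δ * Real.log (s * aak δ γ k))) ^ 2) atTop (nhds 1) := by
    have h1 := (hq.inv₀ (by norm_num : (-1:ℝ) ≠ 0)).pow 2
    norm_num at h1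
    exact h1
  have hlim := hqinv.const_mul (s ^ (-δ : ℝ))
  rw [mul_one] at hlim
  apply hlim.congr'
  have hsa0 : Tendsto (fun k : ℕ => s * aak δ γ k) atTop (nhds 0) := by
    have := (tendsto_aak hδ hγ).const_mul s
    rwa [mul_zero] at this
  filter_upwards [tendsto_lk.eventually (eventually_gt_atTop 1),
    tendsto_llk.eventually (eventually_gt_atTop 0),
    eventually_A_pos hδ hγ,
    hsa0.eventually (eventually_lt_nhds one_pos),
    eventually_aak_pos hδ hγ] with k hlk hllk hA hsmall hapos
  have hsa : 0 < s * aak δ γ k := mul_pos hs hapos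
  have hlsa : Real.log (s * aak δ γ k) < 0 := Real.log_neg hsa hsmall
  have hlk0 : (0:ℝ) < Real.log k := by linarith
  have haA : aak δ γ k = (γ * δ / (Real.log k * (Real.log (Real.log k)) ^ 2)) ^ (1 / δ : ℝ) :=
    rfl
  have hmul : (s * aak δ γ k) ^ (-δ : ℝ) = s ^ (-δ : ℝ) * (aak δ γ k) ^ (-δ : ℝ) :=
    Real.mul_rpow hs.le hapos.le
  have hexp : ((1:ℝ) / δ) * (-δ) = -1 := by field_simp
  have haA2 : (aak δ γ k) ^ (-δ : ℝ) =
      (γ * δ / (Real.log k * (Real.log (Real.log k)) ^ 2))⁻¹ := by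
    rw [haA, ← Real.rpow_mul hA.le, hexp, Real.rpow_neg_one]
  simp only [hh, hmul, haA2]
  have h1 : Real.log (s * aak δ γ k) ≠ 0 := hlsa.ne
  have h2 : Real.log (Real.log k) ≠ 0 := hllk.ne'
  field_simp

lemma G_ratio (hδ : 0 < δ) (hγ : 0 < γ) (hM : 0 < M) {s : ℝ} (hs : 0 < s) :
    Tendsto (fun k : ℕ => G δ γ M (s * aak δ γ k) / Real.log k) atTop
      (nhds (s ^ (-δ : ℝ))) := by
  have hsa0 : Tendsto (fun k : ℕ => s * aak δ γ k) atTop (nhds 0) := by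
    have := (tendsto_aak hδ hγ).const_mul s
    rwa [mul_zero] at this
  have hsa_in : Tendsto (fun k : ℕ => s * aak δ γ k) atTop (nhdsWithin 0 (Set.Ioi 0)) := by
    rw [tendsto_nhdsWithin_iff]
    refine ⟨hsa0, ?_⟩
    filter_upwards [eventually_aak_pos hδ hγ] with k hk
    exact mul_pos hs hk
  have h1 := (G_div_hh_tendsto hδ hγ hM).comp hsa_in
  have h2 := ratio_limit hδ hγ (γ := γ) hs
  have h3 := h1.mul h2
  rw [one_mul] at h3
  apply h3.congr'
  filter_upwards [eventually_aak_pos hδ hγ,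
    hsa0.eventually (eventually_lt_nhds one_pos),
    tendsto_lk.eventually (eventually_gt_atTop 1)] with k hap hsmall hlk
  have hsa : 0 < s * aak δ γ k := mul_pos hs hap
  have hhne : hh δ γ (s * aak δ γ k) ≠ 0 := (hh_pos hδ hγ hsa hsmall).ne'
  have hlkne : Real.log k ≠ 0 := by positivity
  simp only [Function.comp_apply]
  field_simp

lemma eventually_le_expM (hδ : 0 < δ) (hγ : 0 < γ) {s : ℝ} (hs : 0 < s) (M' : ℝ) :
    ∀ᶠ k : ℕ in atTop, s * aak δ γ k ≤ Real.exp (-M') := by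
  have hsa0 : Tendsto (fun k : ℕ => s * aak δ γ k) atTop (nhds 0) := by
    have := (tendsto_aak hδ hγ).const_mul s
    rwa [mul_zero] at this
  filter_upwards [hsa0.eventually (eventually_lt_nhds (Real.exp_pos (-M')))] with k hk
  exact hk.le

/-- Fix `δ, γ ∈ (0,1)` and `M > 2/δ`.  Then
`t_k = (1+o_k(1)) (γδ/(log k (log log k)²))^{1/δ}`, and consequently
`(γ/δ) t_k^{−δ} (log t_k)^{−2} = (1+o_k(1)) log k`. -/
theorem stmt14 (δ γ M : ℝ) (hδ : δ ∈ Ioo (0 : ℝ) 1) (hγ : γ ∈ Ioo (0 : ℝ) 1)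
    (hM : 2 / δ < M) (c : ℕ → ℝ)
    (hc : ∀ᶠ k : ℕ in atTop, 0 < c k ∧ c k < Real.exp (-M) ∧
      IsProbabilityMeasure (muU δ γ M (c k) k)) :
    Tendsto (fun k : ℕ =>
        tkk δ γ M (c k) k *
          (γ * δ / (Real.log k * (Real.log (Real.log k)) ^ 2)) ^ (-(1 / δ) : ℝ))
      atTop (𝓝 1) ∧
    Tendsto (fun k : ℕ =>
        (γ / δ) * (tkk δ γ M (c k) k) ^ (-δ : ℝ) *
          ((Real.log (tkk δ γ M (c k) k)) ^ 2)⁻¹ / Real.log k)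
      atTop (𝓝 1) := by
  obtain ⟨hδ0, hδ1⟩ := hδ
  obtain ⟨hγ0, hγ1⟩ := hγ
  have hM0 : 0 < M := lt_trans (by positivity) hM
  have hδneg : (-δ : ℝ) < 0 := by linarith
  -- sandwich bounds for t_k
  have key : ∀ s1 s2 : ℝ, 0 < s1 → s1 < 1 → 1 < s2 →
      ∀ᶠ k : ℕ in atTop, s1 * aak δ γ k ≤ tkk δ γ M (c k) k ∧
        tkk δ γ M (c k) k ≤ s2 * aak δ γ k := by
    intro s1 s2 hs1 hs1' hs2
    have hs2' : 0 < s2 := lt_trans one_pos hs2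
    have hup := G_ratio hδ0 hγ0 hM0 hs2'
    have hlo := G_ratio hδ0 hγ0 hM0 hs1
    have hupev : ∀ᶠ k : ℕ in atTop, G δ γ M (s2 * aak δ γ k) / Real.log k < 1 :=
      hup.eventually_lt_const (Real.rpow_lt_one_of_one_lt_of_neg hs2 hδneg)
    have hloev : ∀ᶠ k : ℕ in atTop, 1 < G δ γ M (s1 * aak δ γ k) / Real.log k :=
      hlo.eventually_const_lt (Real.one_lt_rpow_of_pos_of_lt_one_of_neg hs1 hs1' hδneg)
    filter_upwards [hc, hupev, hloev, eventually_ge_atTop 2,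
      tendsto_lk.eventually (eventually_gt_atTop 1),
      eventually_aak_pos hδ0 hγ0,
      eventually_le_expM hδ0 hγ0 hs1 M,
      eventually_le_expM hδ0 hγ0 hs2' M] with k hck h2 h3 hk hlk hap hs1M hs2M
    obtain ⟨hc1, hc2, hc3⟩ := hck
    have hlkpos : (0:ℝ) < Real.log k := by linarith
    constructor
    · apply le_tk hδ0 hγ0 hM0 hk hc1 hc2 hc3 (mul_pos hs1 hap) hs1M
      rw [lt_div_iff₀ hlkpos, one_mul] at h3
      exact h3.le
    · apply tk_le hδ0 hγ0 hM0 hk hc1 hc2 hc3 (mul_pos hs2' hap) hs2M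
      rw [div_lt_one hlkpos] at h2
      exact h2
  constructor
  · -- first limit
    rw [Metric.tendsto_nhds]
    intro ε hε
    set ε' := min ε 1 with hε'def
    have hε'0 : 0 < ε' := lt_min hε one_pos
    have hε'1 : ε' ≤ 1 := min_le_right _ _
    have hε'ε : ε' ≤ ε := min_le_left _ _
    have hs1 : (0:ℝ) < 1 - ε' / 2 := by linarith
    filter_upwards [key (1 - ε' / 2) (1 + ε' / 2) hs1 (by linarith) (by linarith),
      eventually_aak_pos hδ0 hγ0, eventually_A_pos hδ0 hγ0] with k hkk hap hA
    obtain ⟨hl, hu⟩ := hkk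
    have hrw : (γ * δ / (Real.log k * (Real.log (Real.log k)) ^ 2)) ^ (-(1 / δ) : ℝ) =
        (aak δ γ k)⁻¹ := by
      rw [Real.rpow_neg hA.le]
      rfl
    rw [Real.dist_eq, hrw, ← div_eq_mul_inv]
    have hd1 : 1 - ε' / 2 ≤ tkk δ γ M (c k) k / aak δ γ k := by
      rw [le_div_iff₀ hap]
      linarith
    have hd2 : tkk δ γ M (c k) k / aak δ γ k ≤ 1 + ε' / 2 := by
      rw [div_le_iff₀ hap]
      linarith
    have : |tkk δ γ M (c k) k / aak δ γ k - 1| ≤ ε' / 2 :=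
      abs_le.mpr ⟨by linarith, by linarith⟩
    linarith
  · -- second limit
    rw [Metric.tendsto_nhds]
    intro ε hε
    have hcont : ContinuousAt (fun s : ℝ => s ^ (-δ : ℝ)) 1 :=
      Real.continuousAt_rpow_const 1 _ (Or.inl one_ne_zero)
    obtain ⟨η, hη0, hball₀⟩ := Metric.continuousAt_iff.mp hcont (ε / 2) (half_pos hε)
    have hball : ∀ x : ℝ, dist x 1 < η → dist (x ^ (-δ : ℝ)) 1 < ε / 2 := by
      intro x hx
      have := hball₀ hx
      rwa [Real.one_rpow] at this
    set η' := min η 1 with hη'def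
    have hη'0 : 0 < η' := lt_min hη0 one_pos
    have hη'1 : η' ≤ 1 := min_le_right _ _
    have hη'η : η' ≤ η := min_le_left _ _
    set s1 := 1 - η' / 2 with hs1def
    set s2 := 1 + η' / 2 with hs2def
    have hs1pos : 0 < s1 := by rw [hs1def]; linarith
    have hs1lt : s1 < 1 := by rw [hs1def]; linarith
    have hs2gt : 1 < s2 := by rw [hs2def]; linarith
    have hs2pos : 0 < s2 := lt_trans one_pos hs2gt
    have hv1 : dist (s1 ^ (-δ : ℝ)) 1 < ε / 2 := by
      apply hball
      rw [Real.dist_eq, hs1def]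
      rw [show 1 - η' / 2 - 1 = -(η' / 2) by ring, abs_neg, abs_of_pos (by linarith)]
      linarith
    have hv2 : dist (s2 ^ (-δ : ℝ)) 1 < ε / 2 := by
      apply hball
      rw [Real.dist_eq, hs2def]
      rw [show 1 + η' / 2 - 1 = η' / 2 by ring, abs_of_pos (by linarith)]
      linarith
    rw [Real.dist_eq] at hv1 hv2
    have hr1 := ratio_limit hδ0 hγ0 (γ := γ) hs1pos
    have hr2 := ratio_limit hδ0 hγ0 (γ := γ) hs2pos
    have hr1ev : ∀ᶠ k : ℕ in atTop,
        hh δ γ (s1 * aak δ γ k) / Real.log k < s1 ^ (-δ : ℝ) + ε / 2 :=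
      hr1.eventually_lt_const (by linarith)
    have hr2ev : ∀ᶠ k : ℕ in atTop,
        s2 ^ (-δ : ℝ) - ε / 2 < hh δ γ (s2 * aak δ γ k) / Real.log k :=
      hr2.eventually_const_lt (by linarith)
    filter_upwards [key s1 s2 hs1pos hs1lt hs2gt, hr1ev, hr2ev,
      tendsto_lk.eventually (eventually_gt_atTop 1),
      eventually_aak_pos hδ0 hγ0,
      eventually_le_expM hδ0 hγ0 hs2pos M] with k hkk h1 h2 hlk hap hs2M
    obtain ⟨hl, hu⟩ := hkk
    have hlkpos : (0:ℝ) < Real.log k := by linarith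
    have hs1a : 0 < s1 * aak δ γ k := mul_pos hs1pos hap
    have htpos : 0 < tkk δ γ M (c k) k := lt_of_lt_of_le hs1a hl
    have htM : tkk δ γ M (c k) k ≤ Real.exp (-M) := le_trans hu hs2M
    have hhl : hh δ γ (tkk δ γ M (c k) k) ≤ hh δ γ (s1 * aak δ γ k) :=
      hh_antitone hδ0 hγ0 hM hs1a hl htM
    have hhu : hh δ γ (s2 * aak δ γ k) ≤ hh δ γ (tkk δ γ M (c k) k) :=
      hh_antitone hδ0 hγ0 hM htpos hu hs2M
    have e1 : hh δ γ (tkk δ γ M (c k) k) / Real.log k ≤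
        hh δ γ (s1 * aak δ γ k) / Real.log k := by gcongr
    have e2 : hh δ γ (s2 * aak δ γ k) / Real.log k ≤
        hh δ γ (tkk δ γ M (c k) k) / Real.log k := by gcongr
    have e3 : s1 ^ (-δ : ℝ) < 1 + ε / 2 := by
      have := (abs_lt.mp hv1).2
      linarith
    have e4 : 1 - ε / 2 < s2 ^ (-δ : ℝ) := by
      have := (abs_lt.mp hv2).1
      linarith
    show dist (hh δ γ (tkk δ γ M (c k) k) / Real.log k) 1 < ε
    rw [Real.dist_eq]
    apply abs_lt.mpr
    constructor
    · linarith
    · linarith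
end
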